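/- arXiv:2002.03655 — 12 statements merged into one kernel-verified Lean document; each statement's English description precedes it below -/
import Mathlib

section
/- Let A be a real n × n matrix that is strictly diagonally dominant by rows, and set α = min over i of (|a_{ii}| − Σ_{j ≠ i} |a_{ij}|), so that α > 0. Then A is invertible and max over i of Σ_j |(A^{−1})_{ij}| ≤ 1/α. -/
open Matrix


/-- Key lemma: for any vector y, α * max|y| ≤ |(A *ᵥ y) k| at the maximizing index. -/
lemma key_aux {n : ℕ} (A : Matrix (Fin n) (Fin n) ℝ)
    (α : ℝ)
    (hα : ∀ i, α ≤ |A i i| - ∑ j ∈ Finset.univ.erase i, |A i j|)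
    (y : Fin n → ℝ) (k : Fin n) (hk : ∀ j, |y j| ≤ |y k|) :
    α * |y k| ≤ |(A *ᵥ y) k| := by
  have h1 : |A k k * y k| - ∑ j ∈ Finset.univ.erase k, |A k j * y j| ≤ |(A *ᵥ y) k| := by
    have : (A *ᵥ y) k = A k k * y k + ∑ j ∈ Finset.univ.erase k, A k j * y j := by
      rw [Matrix.mulVec, dotProduct]
      rw [← Finset.add_sum_erase _ _ (Finset.mem_univ k)]
    rw [this]
    calc |A k k * y k| - ∑ j ∈ Finset.univ.erase k, |A k j * y j|
        ≤ |A k k * y k| - |∑ j ∈ Finset.univ.erase k, A k j * y j| := by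
          gcongr
          exact Finset.abs_sum_le_sum_abs _ _
      _ ≤ |A k k * y k + ∑ j ∈ Finset.univ.erase k, A k j * y j| := by
          rw [sub_le_iff_le_add]
          calc |A k k * y k| = |(A k k * y k + ∑ j ∈ Finset.univ.erase k, A k j * y j)
              - ∑ j ∈ Finset.univ.erase k, A k j * y j| := by ring_nf
            _ ≤ _ := abs_sub _ _
  have h2 : ∑ j ∈ Finset.univ.erase k, |A k j * y j|
      ≤ (∑ j ∈ Finset.univ.erase k, |A k j|) * |y k| := by
    rw [Finset.sum_mul]
    apply Finset.sum_le_sum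
    intro j _
    rw [abs_mul]
    exact mul_le_mul_of_nonneg_left (hk j) (abs_nonneg _)
  calc α * |y k| ≤ (|A k k| - ∑ j ∈ Finset.univ.erase k, |A k j|) * |y k| :=
        mul_le_mul_of_nonneg_right (hα k) (abs_nonneg _)
    _ = |A k k| * |y k| - (∑ j ∈ Finset.univ.erase k, |A k j|) * |y k| := by ring
    _ ≤ |A k k * y k| - ∑ j ∈ Finset.univ.erase k, |A k j * y j| := by
        rw [abs_mul]; linarith
    _ ≤ _ := h1

/-- If a real `n × n` matrix `A` is strictly diagonally dominant by rows and
`α = min_i (|a_{ii}| − Σ_{j ≠ i} |a_{ij}|)`, then `α > 0`, `A` is invertible, and the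
maximum absolute row sum of `A⁻¹` (the sup-norm induced operator norm of `A⁻¹`)
is at most `1/α`. -/
theorem stmt1 {n : ℕ} (hn : 0 < n) (A : Matrix (Fin n) (Fin n) ℝ)
    (hdom : ∀ i, ∑ j ∈ Finset.univ.erase i, |A i j| < |A i i|)
    (α : ℝ)
    (hα : IsLeast (Set.range fun i => |A i i| - ∑ j ∈ Finset.univ.erase i, |A i j|) α) :
    0 < α ∧ IsUnit A ∧ ∀ i, ∑ j, |A⁻¹ i j| ≤ 1 / α := by
  have hαlb : ∀ i, α ≤ |A i i| - ∑ j ∈ Finset.univ.erase i, |A i j| := by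
    intro i
    exact hα.2 ⟨i, rfl⟩
  have hα0 : 0 < α := by
    obtain ⟨i, hi⟩ := hα.1
    have h : |A i i| - ∑ j ∈ Finset.univ.erase i, |A i j| = α := hi
    linarith [hdom i]
  have hunit : IsUnit A := by
    rw [Matrix.isUnit_iff_isUnit_det, isUnit_iff_ne_zero]
    apply det_ne_zero_of_sum_row_lt_diag
    simpa [Real.norm_eq_abs] using hdom
  refine ⟨hα0, hunit, ?_⟩
  intro i
  -- x: sign vector for row i of A⁻¹
  set B := A⁻¹ with hB
  set x : Fin n → ℝ := fun j => if 0 ≤ B i j then 1 else -1 with hx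
  have hxbd : ∀ j, |x j| ≤ 1 := by
    intro j; by_cases h : 0 ≤ B i j <;> simp [hx, h]
  set y : Fin n → ℝ := B *ᵥ x with hy
  have hyi : y i = ∑ j, |B i j| := by
    rw [hy, Matrix.mulVec, dotProduct]
    apply Finset.sum_congr rfl
    intro j _
    by_cases h : 0 ≤ B i j
    · simp [hx, h, abs_of_nonneg h]
    · simp [hx, h, abs_of_neg (lt_of_not_ge h)]
  have hAy : A *ᵥ y = x := by
    rw [hy, Matrix.mulVec_mulVec, hB, Matrix.mul_nonsing_inv A
      ((Matrix.isUnit_iff_isUnit_det A).mp hunit), Matrix.one_mulVec]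
  -- choose maximizing index
  haveI : Nonempty (Fin n) := ⟨⟨0, hn⟩⟩
  obtain ⟨k, hk⟩ := Finset.exists_max_image Finset.univ (fun j => |y j|) ⟨i, Finset.mem_univ i⟩
  have hkmax : ∀ j, |y j| ≤ |y k| := fun j => hk.2 j (Finset.mem_univ j)
  have hkey : α * |y k| ≤ |(A *ᵥ y) k| := key_aux A α hαlb y k hkmax
  have h1 : |(A *ᵥ y) k| ≤ 1 := by rw [hAy]; exact hxbd k
  have h2 : ∑ j, |B i j| ≤ |y k| := by
    rw [← hyi]
    exact le_trans (le_abs_self _) (hkmax i)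
  calc ∑ j, |B i j| ≤ |y k| := h2
    _ ≤ 1 / α := by
        rw [le_div_iff₀ hα0]
        linarith [hkey, h1]
end

section
/- For every real γ with 0 < γ < 1 and every integer k ≥ 1, one has 4((k+1)^{3−γ} − (k−1)^{3−γ}) > (3 − γ)((k+1)^{2−γ} + 6·k^{2−γ} + (k−1)^{2−γ}). (Equivalently, the collocation coefficient m_k = η_{h,γ}[4((k+1)^{3−γ} − (k−1)^{3−γ}) − (3−γ)((k+1)^{2−γ} + 6k^{2−γ} + (k−1)^{2−γ})] is strictly positive, where η_{h,γ} = h^{1−γ}/((3−γ)(2−γ)(1−γ)) > 0.) -/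
open Real

private lemma redm1 {t γ : ℝ} (ht : t ≠ 0) : t ^ (1 - γ) = t ^ (-γ) * t := by
  rw [show (1 - γ) = -γ + 1 by ring, Real.rpow_add_one ht]

private lemma redm2 {t γ : ℝ} (ht : t ≠ 0) : t ^ (2 - γ) = t ^ (-γ) * t * t := by
  rw [show (2 - γ) = -γ + 1 + 1 by ring, Real.rpow_add_one ht, Real.rpow_add_one ht]

private lemma redp1 {t γ : ℝ} (ht : 0 ≤ t) (hγ : γ < 1) : t ^ (2 - γ) = t ^ (1 - γ) * t := by
  rcases ht.eq_or_lt with h | h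
  · rw [← h, Real.zero_rpow (by linarith : (2:ℝ) - γ ≠ 0), Real.zero_rpow (by linarith : (1:ℝ) - γ ≠ 0)]
    ring
  · rw [show (2 - γ) = (1 - γ) + 1 by ring, Real.rpow_add_one h.ne']

private lemma redp2 {t γ : ℝ} (ht : 0 ≤ t) (hγ : γ < 1) : t ^ (3 - γ) = t ^ (1 - γ) * t * t := by
  rcases ht.eq_or_lt with h | h
  · rw [← h, Real.zero_rpow (by linarith : (3:ℝ) - γ ≠ 0), Real.zero_rpow (by linarith : (1:ℝ) - γ ≠ 0)]
    ring
  · rw [show (3 - γ) = (1 - γ) + 1 + 1 by ring, Real.rpow_add_one h.ne', Real.rpow_add_one h.ne']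

private lemma hasDerivAt_congr_d {f : ℝ → ℝ} {f' g' x : ℝ} (h : HasDerivAt f f' x)
    (h2 : f' = g') : HasDerivAt f g' x := h2 ▸ h

private noncomputable def Gaux (γ K : ℝ) : ℝ → ℝ := fun v =>
  2*(2-γ)*(1-γ) * ((K+v)^(3-γ) - (K-v)^(3-γ) - (K+1-v)^(3-γ) + (K-1+v)^(3-γ))
  - (3-γ)*(1-γ) * ((4*K+3)*((K+v)^(2-γ) - (K+1-v)^(2-γ)) - (4*K-3)*((K-v)^(2-γ) - (K-1+v)^(2-γ)))
  + (3-γ)*(2-γ) * ((K+1)*(2*K+1)*((K+v)^(1-γ) - (K+1-v)^(1-γ)) - (K-1)*(2*K-1)*((K-v)^(1-γ) - (K-1+v)^(1-γ)))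

private lemma key (γ K : ℝ) (hγ0 : 0 < γ) (hγ1 : γ < 1) (hK : 1 ≤ K) :
    (3 - γ) * ((K + 1) ^ (2 - γ) + 6 * K ^ (2 - γ) + (K - 1) ^ (2 - γ))
      < 4 * ((K + 1) ^ (3 - γ) - (K - 1) ^ (3 - γ)) := by
  -- continuity of Gaux
  have e1 : (0:ℝ) ≤ 3 - γ := by linarith
  have e2 : (0:ℝ) ≤ 2 - γ := by linarith
  have e3 : (0:ℝ) ≤ 1 - γ := by linarith
  have hc : Continuous (Gaux γ K) := by
    have b1 : Continuous fun v : ℝ => K + v := continuous_const.add continuous_id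
    have b2 : Continuous fun v : ℝ => K - v := continuous_const.sub continuous_id
    have b3 : Continuous fun v : ℝ => K + 1 - v := continuous_const.sub continuous_id
    have b4 : Continuous fun v : ℝ => K - 1 + v := continuous_const.add continuous_id
    unfold Gaux
    exact ((continuous_const.mul ((((b1.rpow_const fun _ => Or.inr e1).sub
      (b2.rpow_const fun _ => Or.inr e1)).sub
      (b3.rpow_const fun _ => Or.inr e1)).add (b4.rpow_const fun _ => Or.inr e1))).sub
      (continuous_const.mul
        ((continuous_const.mul ((b1.rpow_const fun _ => Or.inr e2).sub (b3.rpow_const fun _ => Or.inr e2))).sub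
        (continuous_const.mul ((b2.rpow_const fun _ => Or.inr e2).sub (b4.rpow_const fun _ => Or.inr e2)))))).add
      (continuous_const.mul
        ((continuous_const.mul ((b1.rpow_const fun _ => Or.inr e3).sub (b3.rpow_const fun _ => Or.inr e3))).sub
        (continuous_const.mul ((b2.rpow_const fun _ => Or.inr e3).sub (b4.rpow_const fun _ => Or.inr e3)))))
  -- strict monotonicity
  have hmono : StrictMonoOn (Gaux γ K) (Set.Icc 0 (1/2)) := by
    apply strictMonoOn_of_deriv_pos (convex_Icc 0 (1/2)) hc.continuousOn
    intro x hx
    rw [interior_Icc] at hx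
    obtain ⟨hx0, hx2⟩ := hx
    have hb1 : (0:ℝ) < K + x := by linarith
    have hb2 : (0:ℝ) < K - x := by linarith
    have hb3 : (0:ℝ) < K + 1 - x := by linarith
    have hb4 : (0:ℝ) < K - 1 + x := by linarith
    have h1 : HasDerivAt (fun v : ℝ => K + v) 1 x := by
      simpa using (hasDerivAt_id x).const_add K
    have h2 : HasDerivAt (fun v : ℝ => K - v) (-1) x := by
      simpa using (hasDerivAt_id x).const_sub K
    have h3 : HasDerivAt (fun v : ℝ => K + 1 - v) (-1) x := by
      simpa using (hasDerivAt_id x).const_sub (K + 1)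
    have h4 : HasDerivAt (fun v : ℝ => K - 1 + v) 1 x := by
      simpa using (hasDerivAt_id x).const_add (K - 1)
    have d11 : HasDerivAt (fun v : ℝ => (K+v)^(3-γ)) (1 * (3-γ) * (K+x)^(3-γ-1)) x :=
      h1.rpow_const (Or.inl hb1.ne')
    have d12 : HasDerivAt (fun v : ℝ => (K-v)^(3-γ)) ((-1) * (3-γ) * (K-x)^(3-γ-1)) x :=
      h2.rpow_const (Or.inl hb2.ne')
    have d13 : HasDerivAt (fun v : ℝ => (K+1-v)^(3-γ)) ((-1) * (3-γ) * (K+1-x)^(3-γ-1)) x :=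
      h3.rpow_const (Or.inl hb3.ne')
    have d14 : HasDerivAt (fun v : ℝ => (K-1+v)^(3-γ)) (1 * (3-γ) * (K-1+x)^(3-γ-1)) x :=
      h4.rpow_const (Or.inl hb4.ne')
    have d21 : HasDerivAt (fun v : ℝ => (K+v)^(2-γ)) (1 * (2-γ) * (K+x)^(2-γ-1)) x :=
      h1.rpow_const (Or.inl hb1.ne')
    have d22 : HasDerivAt (fun v : ℝ => (K-v)^(2-γ)) ((-1) * (2-γ) * (K-x)^(2-γ-1)) x :=
      h2.rpow_const (Or.inl hb2.ne')
    have d23 : HasDerivAt (fun v : ℝ => (K+1-v)^(2-γ)) ((-1) * (2-γ) * (K+1-x)^(2-γ-1)) x :=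
      h3.rpow_const (Or.inl hb3.ne')
    have d24 : HasDerivAt (fun v : ℝ => (K-1+v)^(2-γ)) (1 * (2-γ) * (K-1+x)^(2-γ-1)) x :=
      h4.rpow_const (Or.inl hb4.ne')
    have d31 : HasDerivAt (fun v : ℝ => (K+v)^(1-γ)) (1 * (1-γ) * (K+x)^(1-γ-1)) x :=
      h1.rpow_const (Or.inl hb1.ne')
    have d32 : HasDerivAt (fun v : ℝ => (K-v)^(1-γ)) ((-1) * (1-γ) * (K-x)^(1-γ-1)) x :=
      h2.rpow_const (Or.inl hb2.ne')
    have d33 : HasDerivAt (fun v : ℝ => (K+1-v)^(1-γ)) ((-1) * (1-γ) * (K+1-x)^(1-γ-1)) x :=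
      h3.rpow_const (Or.inl hb3.ne')
    have d34 : HasDerivAt (fun v : ℝ => (K-1+v)^(1-γ)) (1 * (1-γ) * (K-1+x)^(1-γ-1)) x :=
      h4.rpow_const (Or.inl hb4.ne')
    have hraw := (((((d11.sub d12).sub d13).add d14).const_mul (2*(2-γ)*(1-γ))).sub
      ((((d21.sub d23).const_mul (4*K+3)).sub ((d22.sub d24).const_mul (4*K-3))).const_mul
        ((3-γ)*(1-γ)))).add
      (((((d31.sub d33).const_mul ((K+1)*(2*K+1))).sub
        ((d32.sub d34).const_mul ((K-1)*(2*K-1))))).const_mul ((3-γ)*(2-γ)))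
    have htot : HasDerivAt (Gaux γ K)
        ((3-γ)*(2-γ)*(1-γ) * ((1-2*x) * ((1-x)*((K+x)^(-γ)+(K-x)^(-γ))
          - x*((K+1-x)^(-γ)+(K-1+x)^(-γ))))) x := by
      refine hasDerivAt_congr_d hraw ?_
      rw [show (3:ℝ)-γ-1 = 2-γ by ring, show (2:ℝ)-γ-1 = 1-γ by ring,
        show (1:ℝ)-γ-1 = -γ by ring,
        redm2 hb1.ne', redm2 hb2.ne', redm2 hb3.ne', redm2 hb4.ne',
        redm1 hb1.ne', redm1 hb2.ne', redm1 hb3.ne', redm1 hb4.ne']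
      ring
    rw [htot.deriv]
    -- positivity of the derivative
    have hA : (0:ℝ) < (K+x)^(-γ) := Real.rpow_pos_of_pos hb1 _
    have hB : (0:ℝ) < (K-x)^(-γ) := Real.rpow_pos_of_pos hb2 _
    have hC : (0:ℝ) < (K+1-x)^(-γ) := Real.rpow_pos_of_pos hb3 _
    have hD : (0:ℝ) < (K-1+x)^(-γ) := Real.rpow_pos_of_pos hb4 _
    have sub1 : x * (K+1-x)^(-γ) < (1-x) * (K+x)^(-γ) := by
      have hCA : (K+1-x)^(-γ) ≤ (K+x)^(-γ) :=
        Real.rpow_le_rpow_of_nonpos hb1 (by linarith) (by linarith)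
      nlinarith
    have sub2 : x * (K-1+x)^(-γ) ≤ (1-x) * (K-x)^(-γ) := by
      have hq : (0:ℝ) < (K-1+x)/(K-x) := div_pos hb4 hb2
      have hq1 : (K-1+x)/(K-x) ≤ 1 := (div_le_one hb2).2 (by linarith)
      have hratio : (K-1+x)/(K-x) ≤ ((K-1+x)/(K-x))^γ := by
        have := Real.rpow_le_rpow_of_exponent_ge hq hq1 hγ1.le
        simpa using this
      have hmul : ((K-1+x)/(K-x))^γ * (K-x)^γ = (K-1+x)^γ := by
        rw [← Real.mul_rpow (le_of_lt hq) hb2.le, div_mul_cancel₀ _ hb2.ne']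
      have hga : (0:ℝ) < (K-x)^γ := Real.rpow_pos_of_pos hb2 _
      have hgb : (0:ℝ) < (K-1+x)^γ := Real.rpow_pos_of_pos hb4 _
      have hlin : x * (K-x) ≤ (1-x) * (K-1+x) := by
        nlinarith [mul_nonneg (by linarith : (0:ℝ) ≤ K-1) (by linarith : (0:ℝ) ≤ 1-2*x)]
      have h9 : x ≤ (1-x) * ((K-1+x)/(K-x)) := by
        rw [← mul_div_assoc, le_div_iff₀ hb2]
        linarith
      have h8 : ((K-1+x)/(K-x)) * (K-x)^γ ≤ (K-1+x)^γ :=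
        le_of_le_of_eq (mul_le_mul_of_nonneg_right hratio hga.le) hmul
      have hcross : x * (K-x)^γ ≤ (1-x) * (K-1+x)^γ := by
        have h6 := mul_le_mul_of_nonneg_right h9 hga.le
        have h7 := mul_le_mul_of_nonneg_left h8 (by linarith : (0:ℝ) ≤ 1-x)
        nlinarith
      rw [Real.rpow_neg hb4.le, Real.rpow_neg hb2.le, ← div_eq_mul_inv, ← div_eq_mul_inv]
      rw [div_le_div_iff₀ hgb hga]
      nlinarith
    have hfac : (0:ℝ) < (3-γ)*(2-γ)*(1-γ) :=
      mul_pos (mul_pos (by linarith) (by linarith)) (by linarith)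
    have h12 : (0:ℝ) < 1 - 2*x := by linarith
    have hbr : (0:ℝ) < (1-x)*((K+x)^(-γ)+(K-x)^(-γ)) - x*((K+1-x)^(-γ)+(K-1+x)^(-γ)) := by
      nlinarith
    exact mul_pos hfac (mul_pos h12 hbr)
  -- evaluate at endpoints
  have hhalf : Gaux γ K (1/2) = 0 := by
    unfold Gaux
    rw [show K + 1 - (1/2:ℝ) = K + 1/2 by ring, show K - 1 + (1/2:ℝ) = K - 1/2 by ring]
    ring
  have hzero : Gaux γ K 0 =
      (3 - γ) * ((K + 1) ^ (2 - γ) + 6 * K ^ (2 - γ) + (K - 1) ^ (2 - γ))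
        - 4 * ((K + 1) ^ (3 - γ) - (K - 1) ^ (3 - γ)) := by
    unfold Gaux
    rw [add_zero, sub_zero, sub_zero, add_zero,
      redp2 (by linarith : (0:ℝ) ≤ K + 1) hγ1, redp2 (by linarith : (0:ℝ) ≤ K) hγ1,
      redp2 (by linarith : (0:ℝ) ≤ K - 1) hγ1,
      redp1 (by linarith : (0:ℝ) ≤ K + 1) hγ1, redp1 (by linarith : (0:ℝ) ≤ K) hγ1,
      redp1 (by linarith : (0:ℝ) ≤ K - 1) hγ1]
    ring
  have hlt : Gaux γ K 0 < Gaux γ K (1/2) :=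
    hmono ⟨le_refl 0, by norm_num⟩ ⟨by norm_num, le_refl _⟩ (by norm_num)
  rw [hhalf, hzero] at hlt
  linarith

/-- For `0 < γ < 1` and every integer `k ≥ 1`,
`4((k+1)^{3−γ} − (k−1)^{3−γ}) > (3 − γ)((k+1)^{2−γ} + 6 k^{2−γ} + (k−1)^{2−γ})`;
equivalently, the collocation coefficient `m_k` is strictly positive. -/
theorem stmt2 (γ : ℝ) (hγ0 : 0 < γ) (hγ1 : γ < 1) (k : ℕ) (hk : 1 ≤ k) :
    (3 - γ) * (((k : ℝ) + 1) ^ (2 - γ) + 6 * (k : ℝ) ^ (2 - γ) + ((k : ℝ) - 1) ^ (2 - γ))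
      < 4 * (((k : ℝ) + 1) ^ (3 - γ) - ((k : ℝ) - 1) ^ (3 - γ)) := by
  exact key γ (k : ℝ) hγ0 hγ1 (by exact_mod_cast hk)
end

section
/- For every real γ with 0 < γ < 1 and every integer k ≥ 0, one has (3 − γ)((k+1)^{2−γ} + k^{2−γ}) > 2((k+1)^{3−γ} − k^{3−γ}). (Equivalently, the collocation coefficient q_k = η_{h,γ}[−8((k+1)^{3−γ} − k^{3−γ}) + 4(3−γ)((k+1)^{2−γ} + k^{2−γ})] is strictly positive, where η_{h,γ} = h^{1−γ}/((3−γ)(2−γ)(1−γ)) > 0.) -/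
open intervalIntegral Real Set

/-- For `0 < γ < 1` and every integer `k ≥ 0`,
`(3 − γ)((k+1)^{2−γ} + k^{2−γ}) > 2((k+1)^{3−γ} − k^{3−γ})`;
equivalently, the collocation coefficient `q_k` is strictly positive. -/
theorem stmt3 (γ : ℝ) (hγ0 : 0 < γ) (hγ1 : γ < 1) (k : ℕ) :
    2 * (((k : ℝ) + 1) ^ (3 - γ) - (k : ℝ) ^ (3 - γ))
      < (3 - γ) * (((k : ℝ) + 1) ^ (2 - γ) + (k : ℝ) ^ (2 - γ)) := by
  set q : ℝ := 2 - γ with hq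
  have hq1 : 1 < q := by rw [hq]; linarith
  have hq0 : (0 : ℝ) ≤ q := by linarith
  have hk0 : (0 : ℝ) ≤ (k : ℝ) := Nat.cast_nonneg k
  set d : ℝ := ((k : ℝ) + 1) ^ q - (k : ℝ) ^ q with hd
  -- the linear interpolant
  set g : ℝ → ℝ := fun x => (k : ℝ) ^ q + d * (x - (k : ℝ)) with hg
  have hgint : (∫ x in (k : ℝ)..((k : ℝ) + 1), g x)
      = ((k : ℝ) ^ q + ((k : ℝ) + 1) ^ q) / 2 := by
    have h1 : (∫ x in (k : ℝ)..((k : ℝ) + 1), g x)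
        = ∫ x in (0 : ℝ)..1, ((k : ℝ) ^ q + d * x) := by
      have := intervalIntegral.integral_comp_sub_right
        (a := (k : ℝ)) (b := (k : ℝ) + 1)
        (fun x => (k : ℝ) ^ q + d * x) (k : ℝ)
      simpa [hg] using this
    rw [h1, intervalIntegral.integral_add intervalIntegrable_const
      ((by fun_prop : Continuous fun x : ℝ => d * x).intervalIntegrable _ _),
      intervalIntegral.integral_const_mul, integral_id, intervalIntegral.integral_const]
    rw [hd]
    norm_num
    ring
  -- strict inequality between the integral of x^q and the trapezoid value
  have key : (∫ x in (k : ℝ)..((k : ℝ) + 1), x ^ q)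
      < ((k : ℝ) ^ q + ((k : ℝ) + 1) ^ q) / 2 := by
    rw [← hgint]
    apply intervalIntegral.integral_lt_integral_of_continuousOn_of_le_of_exists_lt
      (by linarith : (k : ℝ) < (k : ℝ) + 1)
    · exact (Real.continuous_rpow_const hq0).continuousOn
    · exact (continuous_const.add (continuous_const.mul
        (continuous_id.sub continuous_const))).continuousOn
    · intro x hx
      rcases hx with ⟨hx1, hx2⟩
      set s : ℝ := x - (k : ℝ) with hs
      have hs0 : 0 ≤ s := by simp [hs]; linarith
      have hs1 : s ≤ 1 := by simp [hs]; linarith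
      have h1s : 0 ≤ 1 - s := by linarith
      have hcv := (convexOn_rpow (le_of_lt hq1)).2
        (mem_Ici.2 hk0) (mem_Ici.2 (by linarith : (0:ℝ) ≤ (k:ℝ) + 1))
        h1s hs0 (by ring)
      have hx : (1 - s) • (k : ℝ) + s • ((k : ℝ) + 1) = x := by
        simp [smul_eq_mul, hs]; ring
      rw [hx] at hcv
      calc x ^ q ≤ (1 - s) • (k : ℝ) ^ q + s • ((k : ℝ) + 1) ^ q := hcv
        _ = g x := by simp [hg, smul_eq_mul, hd, hs]; ring
    · refine ⟨(k : ℝ) + 1 / 2, ⟨by linarith, by linarith⟩, ?_⟩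
      have hcv := (strictConvexOn_rpow hq1).2
        (mem_Ici.2 hk0) (mem_Ici.2 (by linarith : (0:ℝ) ≤ (k:ℝ) + 1))
        (by linarith : (k : ℝ) ≠ (k : ℝ) + 1)
        (by norm_num : (0:ℝ) < 1/2) (by norm_num : (0:ℝ) < 1/2) (by norm_num)
      have hx : (1/2 : ℝ) • (k : ℝ) + (1/2 : ℝ) • ((k : ℝ) + 1) = (k : ℝ) + 1/2 := by
        simp [smul_eq_mul]; ring
      rw [hx] at hcv
      calc ((k : ℝ) + 1/2) ^ q
          < (1/2 : ℝ) • (k : ℝ) ^ q + (1/2 : ℝ) • ((k : ℝ) + 1) ^ q := hcv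
        _ = g ((k : ℝ) + 1/2) := by simp [hg, smul_eq_mul, hd]; ring
  have hint : (∫ x in (k : ℝ)..((k : ℝ) + 1), x ^ q)
      = (((k : ℝ) + 1) ^ (q + 1) - (k : ℝ) ^ (q + 1)) / (q + 1) :=
    integral_rpow (Or.inl (by linarith))
  rw [hint] at key
  rw [div_lt_div_iff₀ (by linarith : (0:ℝ) < q + 1) (by norm_num : (0:ℝ) < 2)] at key
  have h31 : (3 : ℝ) - γ = q + 1 := by rw [hq]; ring
  rw [h31]
  nlinarith [key]
end

section
/- For every real γ with 0 < γ < 1, one has 4((3/2)^{3−γ} − (1/2)^{3−γ}) > (3 − γ)((3/2)^{2−γ} + 3·(1/2)^{2−γ}). (Equivalently, the collocation coefficient p_0 = η_{h,γ}[4((3/2)^{3−γ} − (1/2)^{3−γ}) − (3−γ)((3/2)^{2−γ} + 3(1/2)^{2−γ})] is strictly positive, where η_{h,γ} = h^{1−γ}/((3−γ)(2−γ)(1−γ)) > 0.) -/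
/-- For `0 < γ < 1`,
`4((3/2)^{3−γ} − (1/2)^{3−γ}) > (3 − γ)((3/2)^{2−γ} + 3 (1/2)^{2−γ})`;
equivalently, the collocation coefficient `p_0` is strictly positive. -/
theorem stmt4 (γ : ℝ) (hγ0 : 0 < γ) (hγ1 : γ < 1) :
    (3 - γ) * (((3 : ℝ) / 2) ^ (2 - γ) + 3 * ((1 : ℝ) / 2) ^ (2 - γ))
      < 4 * (((3 : ℝ) / 2) ^ (3 - γ) - ((1 : ℝ) / 2) ^ (3 - γ)) := by
  have h32 : (0:ℝ) < 3/2 := by norm_num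
  have h12 : (0:ℝ) < 1/2 := by norm_num
  -- Bernoulli-type bound: 3^γ ≤ 1 + 2γ
  have hBern : (3:ℝ) ^ γ ≤ 1 + γ * 2 := by
    have := rpow_one_add_le_one_add_mul_self (s := 2) (p := γ) (by norm_num)
      hγ0.le hγ1.le
    norm_num at this
    linarith [this]
  -- 3^γ * 3^(2-γ) = 9
  have hprod : (3:ℝ) ^ γ * (3:ℝ) ^ (2 - γ) = 9 := by
    rw [← Real.rpow_add (by norm_num : (0:ℝ) < 3)]
    norm_num [show (2:ℝ) = ((2:ℕ):ℝ) from by norm_num, Real.rpow_natCast]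
  have hT0 : (0:ℝ) < (3:ℝ) ^ (2 - γ) := Real.rpow_pos_of_pos (by norm_num) _
  have hg0 : (0:ℝ) < (3:ℝ) ^ γ := Real.rpow_pos_of_pos (by norm_num) _
  -- key: 11 - 3γ < (3 + γ) * 3^(2-γ)
  have key : 11 - 3*γ < (3 + γ) * (3:ℝ) ^ (2 - γ) := by
    nlinarith [mul_pos hT0 (mul_pos hγ0 hγ0), sq_nonneg γ, hT0, hg0,
      mul_le_mul_of_nonneg_right hBern hT0.le]
  set a : ℝ := ((1:ℝ)/2) ^ (2 - γ) with ha_def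
  have ha : 0 < a := Real.rpow_pos_of_pos h12 _
  have hsplit : ((3:ℝ)/2) ^ (2 - γ) = (3:ℝ) ^ (2 - γ) * a := by
    rw [ha_def, ← Real.mul_rpow (by norm_num) (by norm_num)]
    norm_num
  have h3 : (3:ℝ) - γ = (2 - γ) + 1 := by ring
  have e1 : ((3:ℝ)/2) ^ (3 - γ) = ((3:ℝ)/2) ^ (2 - γ) * (3/2) := by
    rw [h3, Real.rpow_add h32, Real.rpow_one]
  have e2 : ((1:ℝ)/2) ^ (3 - γ) = a * (1/2) := by
    rw [h3, Real.rpow_add h12, Real.rpow_one]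
  rw [e1, e2, hsplit]
  nlinarith [mul_lt_mul_of_pos_right key ha, ha, hT0]
end

section
/- Let a < b be real numbers, 0 < γ < 1, h > 0, and let A = (a_{ij}) be a real n × n matrix such that for every row i: a_{ii} > 0, a_{ii} ≤ 2(b − a)^{1−γ}/(1 − γ), and a_{ii} − Σ_{j ≠ i} |a_{ij}| ≥ (b − a)^{−γ} h. Then A is invertible and its sup-norm condition number satisfies κ_∞(A) = ‖A‖_∞ ‖A^{−1}‖_∞ ≤ 4(b − a)/((1 − γ) h). -/
/-- Condition-number bound for the collocation matrix: if each diagonal entry of `A`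
is positive and bounded by `2(b−a)^{1−γ}/(1−γ)`, and each row diagonal dominance gap
is at least `(b−a)^{−γ} h`, then `A` is invertible and
`κ_∞(A) = ‖A‖_∞ ‖A⁻¹‖_∞ ≤ 4(b−a)/((1−γ)h)`, where `‖·‖_∞` is the maximum absolute
row sum. -/
theorem stmt5 {n : ℕ} (hn : 0 < n) (a b γ h : ℝ) (hab : a < b)
    (hγ0 : 0 < γ) (hγ1 : γ < 1) (hh : 0 < h)
    (A : Matrix (Fin n) (Fin n) ℝ)
    (hdiagpos : ∀ i, 0 < A i i)
    (hdiagbd : ∀ i, A i i ≤ 2 * (b - a) ^ (1 - γ) / (1 - γ))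
    (hdom : ∀ i, (b - a) ^ (-γ) * h ≤ A i i - ∑ j ∈ Finset.univ.erase i, |A i j|) :
    IsUnit A ∧
      (Finset.univ.sup' ⟨⟨0, hn⟩, Finset.mem_univ _⟩ fun i => ∑ j, |A i j|) *
        (Finset.univ.sup' ⟨⟨0, hn⟩, Finset.mem_univ _⟩ fun i => ∑ j, |A⁻¹ i j|) ≤
      4 * (b - a) / ((1 - γ) * h) := by
  have hba : (0:ℝ) < b - a := sub_pos.mpr hab
  set δ : ℝ := (b - a) ^ (-γ) * h with hδdef
  have hδ : 0 < δ := mul_pos (Real.rpow_pos_of_pos hba _) hh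
  -- strict diagonal dominance
  have hstrict : ∀ k, ∑ j ∈ Finset.univ.erase k, ‖A k j‖ < ‖A k k‖ := by
    intro k
    simp only [Real.norm_eq_abs]
    rw [abs_of_pos (hdiagpos k)]
    have := hdom k
    linarith
  have hdet : A.det ≠ 0 := det_ne_zero_of_sum_row_lt_diag hstrict
  have hUnit : IsUnit A := A.isUnit_iff_isUnit_det.mpr (isUnit_iff_ne_zero.mpr hdet)
  refine ⟨hUnit, ?_⟩
  have hAB : A * A⁻¹ = 1 := A.mul_nonsing_inv (isUnit_iff_ne_zero.mpr hdet)
  have hγ1' : (0:ℝ) < 1 - γ := by linarith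
  -- row sums of A are bounded
  have hrowA : ∀ i, ∑ j, |A i j| ≤ 4 * (b - a) ^ (1 - γ) / (1 - γ) := by
    intro i
    have h1 : ∑ j, |A i j| = |A i i| + ∑ j ∈ Finset.univ.erase i, |A i j| :=
      (Finset.add_sum_erase _ _ (Finset.mem_univ i)).symm
    rw [h1, abs_of_pos (hdiagpos i)]
    have h2 := hdom i
    have h3 := hdiagbd i
    have : ∑ j ∈ Finset.univ.erase i, |A i j| ≤ A i i := by linarith
    calc A i i + ∑ j ∈ Finset.univ.erase i, |A i j| ≤ 2 * A i i := by linarith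
    _ ≤ 2 * (2 * (b - a) ^ (1 - γ) / (1 - γ)) := by linarith
    _ = 4 * (b - a) ^ (1 - γ) / (1 - γ) := by ring
  -- Varah bound: row sums of A⁻¹ ≤ 1/δ
  have hrowB : ∀ i, ∑ j, |A⁻¹ i j| ≤ 1 / δ := by
    intro i
    set x : Fin n → ℝ := fun j => if 0 ≤ A⁻¹ i j then 1 else -1 with hx
    have hxabs : ∀ j, |x j| ≤ 1 := by
      intro j; by_cases hj : 0 ≤ A⁻¹ i j <;> simp [hx, hj]
    set y : Fin n → ℝ := A⁻¹.mulVec x with hy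
    have hyA : A.mulVec y = x := by
      rw [hy, Matrix.mulVec_mulVec, hAB, Matrix.one_mulVec]
    have hyi : y i = ∑ j, |A⁻¹ i j| := by
      rw [hy]
      simp only [Matrix.mulVec, dotProduct]
      refine Finset.sum_congr rfl fun j _ => ?_
      by_cases hj : 0 ≤ A⁻¹ i j
      · simp [hx, hj, abs_of_nonneg hj]
      · push_neg at hj
        simp [hx, not_le.mpr hj, abs_of_neg hj]
    -- pick k maximizing |y k|
    have hne : (Finset.univ : Finset (Fin n)).Nonempty := ⟨⟨0, hn⟩, Finset.mem_univ _⟩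
    obtain ⟨k, -, hk⟩ := Finset.exists_mem_eq_sup' hne fun j => |y j|
    have hkmax : ∀ j, |y j| ≤ |y k| := fun j =>
      hk ▸ Finset.le_sup' (fun j => |y j|) (Finset.mem_univ j)
    have hAk : (A.mulVec y) k = A k k * y k + ∑ j ∈ Finset.univ.erase k, A k j * y j := by
      simp only [Matrix.mulVec, dotProduct]
      exact (Finset.add_sum_erase _ _ (Finset.mem_univ k)).symm
    have hrest : |∑ j ∈ Finset.univ.erase k, A k j * y j| ≤ (A k k - δ) * |y k| := by
      calc |∑ j ∈ Finset.univ.erase k, A k j * y j|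
          ≤ ∑ j ∈ Finset.univ.erase k, |A k j * y j| := Finset.abs_sum_le_sum_abs _ _
        _ ≤ ∑ j ∈ Finset.univ.erase k, |A k j| * |y k| := by
            refine Finset.sum_le_sum fun j _ => ?_
            rw [abs_mul]
            exact mul_le_mul_of_nonneg_left (hkmax j) (abs_nonneg _)
        _ = (∑ j ∈ Finset.univ.erase k, |A k j|) * |y k| := (Finset.sum_mul _ _ _).symm
        _ ≤ (A k k - δ) * |y k| := by
            refine mul_le_mul_of_nonneg_right ?_ (abs_nonneg _)
            have := hdom k; linarith
    have hlow : δ * |y k| ≤ |(A.mulVec y) k| := by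
      rw [hAk]
      have h1 : |A k k * y k| - |∑ j ∈ Finset.univ.erase k, A k j * y j|
          ≤ |A k k * y k + ∑ j ∈ Finset.univ.erase k, A k j * y j| := by
        have := abs_sub_abs_le_abs_sub (A k k * y k) (-(∑ j ∈ Finset.univ.erase k, A k j * y j))
        rwa [abs_neg, sub_neg_eq_add] at this
      have h2 : |A k k * y k| = A k k * |y k| := by
        rw [abs_mul, abs_of_pos (hdiagpos k)]
      nlinarith
    have hxk : |(A.mulVec y) k| ≤ 1 := by rw [hyA]; exact hxabs k
    have hyk : |y k| ≤ 1 / δ := by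
      rw [le_div_iff₀ hδ]
      nlinarith
    calc ∑ j, |A⁻¹ i j| = y i := hyi.symm
      _ ≤ |y i| := le_abs_self _
      _ ≤ |y k| := hkmax i
      _ ≤ 1 / δ := hyk
  -- combine
  have hsup1 : (Finset.univ.sup' ⟨⟨0, hn⟩, Finset.mem_univ _⟩ fun i => ∑ j, |A i j|)
      ≤ 4 * (b - a) ^ (1 - γ) / (1 - γ) := Finset.sup'_le _ _ fun i _ => hrowA i
  have hsup2 : (Finset.univ.sup' ⟨⟨0, hn⟩, Finset.mem_univ _⟩ fun i => ∑ j, |A⁻¹ i j|)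
      ≤ 1 / δ := Finset.sup'_le _ _ fun i _ => hrowB i
  have hsup2nn : 0 ≤ (Finset.univ.sup' ⟨⟨0, hn⟩, Finset.mem_univ _⟩ fun i => ∑ j, |A⁻¹ i j|) :=
    le_trans (Finset.sum_nonneg fun j _ => abs_nonneg _)
      (Finset.le_sup' (fun i => ∑ j, |A⁻¹ i j|) (Finset.mem_univ (⟨0, hn⟩ : Fin n)))
  have hM1 : (0:ℝ) ≤ 4 * (b - a) ^ (1 - γ) / (1 - γ) := by
    positivity
  have key : (4 * (b - a) ^ (1 - γ) / (1 - γ)) * (1 / δ) = 4 * (b - a) / ((1 - γ) * h) := by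
    rw [hδdef]
    rw [Real.rpow_neg hba.le]
    have h1 : (b - a) ^ (1 - γ) * (b - a) ^ γ = b - a := by
      rw [← Real.rpow_add hba]; norm_num
    have hγpos : (0:ℝ) < (b - a) ^ γ := Real.rpow_pos_of_pos hba _
    field_simp
    nlinarith [Real.rpow_pos_of_pos hba (1-γ)]
  calc (Finset.univ.sup' ⟨⟨0, hn⟩, Finset.mem_univ _⟩ fun i => ∑ j, |A i j|) *
        (Finset.univ.sup' ⟨⟨0, hn⟩, Finset.mem_univ _⟩ fun i => ∑ j, |A⁻¹ i j|)
      ≤ (4 * (b - a) ^ (1 - γ) / (1 - γ)) * (1 / δ) :=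
        mul_le_mul hsup1 hsup2 hsup2nn hM1
    _ = 4 * (b - a) / ((1 - γ) * h) := key
end

section
/- Let n ∈ ℕ, τ > 0, C_a > 0, and let A = (a_{ij}) be a real n × n matrix such that for every i: 0 < a_{ii} ≤ C_a, a_{ij} ≤ 0 for all j ≠ i, and Σ_{j ≠ i} |a_{ij}| < a_{ii}. Let (ε^k)_{k ≥ 0} be a sequence of vectors in ℝ^n satisfying (I + (τ/2)A) ε^k = (I − (τ/2)A) ε^{k−1} for all k ≥ 1. Then for every k ≥ 0, ‖ε^k‖_∞ ≤ (1 + C_a τ)^k ‖ε^0‖_∞; in particular, if kτ ≤ T then ‖ε^k‖_∞ ≤ exp(T C_a) ‖ε^0‖_∞ (unconditional stability of the Crank–Nicolson scheme). -/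
open Matrix Finset

lemma cn_step {n : ℕ} (τ Ca : ℝ) (hτ : 0 < τ) (hCa : 0 < Ca)
    (A : Matrix (Fin n) (Fin n) ℝ)
    (hdiag : ∀ i, 0 < A i i ∧ A i i ≤ Ca)
    (hdom : ∀ i, ∑ j ∈ Finset.univ.erase i, |A i j| < A i i)
    (x y : Fin n → ℝ)
    (hxy : (1 + (τ / 2) • A) *ᵥ x = (1 - (τ / 2) • A) *ᵥ y) :
    ‖x‖ ≤ (1 + Ca * τ) * ‖y‖ := by
  have hy0 : (0:ℝ) ≤ ‖y‖ := norm_nonneg _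
  have hb : (0:ℝ) ≤ (1 + Ca * τ) * ‖y‖ := by positivity
  rcases Nat.eq_zero_or_pos n with hn | hn
  · subst hn
    have hx : x = 0 := Subsingleton.elim x 0
    rw [hx, norm_zero]; exact hb
  · obtain ⟨i, -, hi⟩ := Finset.exists_max_image Finset.univ (fun j => |x j|)
      ⟨⟨0, hn⟩, Finset.mem_univ _⟩
    simp only [Finset.mem_univ, forall_true_left] at hi
    rw [pi_norm_le_iff_of_nonneg hb]
    intro j
    rw [Real.norm_eq_abs]
    refine (hi j).trans ?_
    -- now bound |x i|
    set c : ℝ := τ / 2 with hc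
    have hc0 : 0 < c := by positivity
    have heq := congrFun hxy i
    simp only [Matrix.add_mulVec, Matrix.sub_mulVec, Matrix.one_mulVec,
      Matrix.smul_mulVec, Pi.add_apply, Pi.sub_apply, Pi.smul_apply,
      smul_eq_mul] at heq
    simp only [Matrix.mulVec, dotProduct] at heq
    have hsplitx : ∑ j, A i j * x j = A i i * x i + ∑ j ∈ univ.erase i, A i j * x j := by
      rw [← Finset.add_sum_erase _ _ (Finset.mem_univ i)]
    have hsplity : ∑ j, A i j * y j = A i i * y i + ∑ j ∈ univ.erase i, A i j * y j := by
      rw [← Finset.add_sum_erase _ _ (Finset.mem_univ i)]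
    rw [hsplitx, hsplity] at heq
    set Sx := ∑ j ∈ univ.erase i, A i j * x j
    set Sy := ∑ j ∈ univ.erase i, A i j * y j
    set s := ∑ j ∈ univ.erase i, |A i j| with hs
    have hsnn : 0 ≤ s := Finset.sum_nonneg fun j _ => abs_nonneg _
    have hAii := hdiag i
    have hsA : s < A i i := hdom i
    have hSx : |Sx| ≤ s * |x i| := by
      calc |Sx| ≤ ∑ j ∈ univ.erase i, |A i j * x j| := Finset.abs_sum_le_sum_abs _ _
        _ ≤ ∑ j ∈ univ.erase i, |A i j| * |x i| := by
            refine Finset.sum_le_sum fun j _ => ?_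
            rw [abs_mul]
            exact mul_le_mul_of_nonneg_left (hi j) (abs_nonneg _)
        _ = s * |x i| := by rw [← Finset.sum_mul]
    have hyn : ∀ j, |y j| ≤ ‖y‖ := fun j => by
      rw [← Real.norm_eq_abs]; exact norm_le_pi_norm y j
    have hSy : |Sy| ≤ s * ‖y‖ := by
      calc |Sy| ≤ ∑ j ∈ univ.erase i, |A i j * y j| := Finset.abs_sum_le_sum_abs _ _
        _ ≤ ∑ j ∈ univ.erase i, |A i j| * ‖y‖ := by
            refine Finset.sum_le_sum fun j _ => ?_
            rw [abs_mul]
            exact mul_le_mul_of_nonneg_left (hyn j) (abs_nonneg _)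
        _ = s * ‖y‖ := by rw [← Finset.sum_mul]
    -- lower bound on |LHS|
    have h1 : (1 + c * A i i) * |x i| ≤ |x i + c * (A i i * x i + Sx)| + c * |Sx| := by
      have hpos : (0:ℝ) < 1 + c * A i i := by nlinarith [hAii.1]
      have habs : (1 + c * A i i) * |x i| = |(1 + c * A i i) * x i| := by
        rw [abs_mul, abs_of_pos hpos]
      rw [habs]
      have : (1 + c * A i i) * x i = (x i + c * (A i i * x i + Sx)) + (-(c * Sx)) := by ring
      rw [this]
      calc |_| ≤ |x i + c * (A i i * x i + Sx)| + |(-(c * Sx))| := abs_add_le _ _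
        _ = |x i + c * (A i i * x i + Sx)| + c * |Sx| := by
            rw [abs_neg, abs_mul, abs_of_pos hc0]
    -- upper bound on |RHS|
    have h2 : |y i - c * (A i i * y i + Sy)| ≤ (1 + Ca * τ) * ‖y‖ := by
      calc |y i - c * (A i i * y i + Sy)|
          ≤ |y i| + |c * (A i i * y i + Sy)| := abs_sub _ _
        _ = |y i| + c * |A i i * y i + Sy| := by rw [abs_mul, abs_of_pos hc0]
        _ ≤ |y i| + c * (|A i i * y i| + |Sy|) := by
            have h5 := abs_add_le (A i i * y i) Sy
            nlinarith [mul_le_mul_of_nonneg_left h5 hc0.le]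
        _ ≤ ‖y‖ + c * (A i i * ‖y‖ + s * ‖y‖) := by
            have h3 : |A i i * y i| ≤ A i i * ‖y‖ := by
              rw [abs_mul, abs_of_pos hAii.1]
              exact mul_le_mul_of_nonneg_left (hyn i) (le_of_lt hAii.1)
            linarith [hyn i,
              mul_le_mul_of_nonneg_left (add_le_add h3 hSy) hc0.le]
        _ ≤ (1 + Ca * τ) * ‖y‖ := by
            have h4 : A i i * ‖y‖ + s * ‖y‖ ≤ 2 * Ca * ‖y‖ := by
              nlinarith [hAii.2, hsA.le, hy0]
            have h6 : c * (A i i * ‖y‖ + s * ‖y‖) ≤ c * (2 * Ca * ‖y‖) :=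
              mul_le_mul_of_nonneg_left h4 hc0.le
            have h7 : ‖y‖ + c * (2 * Ca * ‖y‖) = (1 + Ca * τ) * ‖y‖ := by
              rw [hc]; ring
            linarith
    have hxle : |x i| ≤ |x i + c * (A i i * x i + Sx)| := by
      nlinarith [abs_nonneg (x i), mul_le_mul_of_nonneg_left hSx hc0.le,
        mul_nonneg (mul_nonneg hc0.le (sub_pos.2 hsA).le) (abs_nonneg (x i))]
    calc |x i| ≤ |x i + c * (A i i * x i + Sx)| := hxle
      _ = |y i - c * (A i i * y i + Sy)| := by rw [heq]
      _ ≤ (1 + Ca * τ) * ‖y‖ := h2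

/-- Unconditional stability of the Crank–Nicolson scheme in 1D: if `A` has positive
diagonal bounded by `C_a`, nonpositive off-diagonal entries, and is strictly diagonally
dominant by rows, and `(I + (τ/2)A) ε^k = (I − (τ/2)A) ε^{k−1}` for all `k ≥ 1`, then
`‖ε^k‖_∞ ≤ (1 + C_a τ)^k ‖ε^0‖_∞`, and if `kτ ≤ T` then
`‖ε^k‖_∞ ≤ exp(T C_a) ‖ε^0‖_∞`. -/
theorem stmt6 {n : ℕ} (τ Ca : ℝ) (hτ : 0 < τ) (hCa : 0 < Ca)
    (A : Matrix (Fin n) (Fin n) ℝ)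
    (hdiag : ∀ i, 0 < A i i ∧ A i i ≤ Ca)
    (hoff : ∀ i j, j ≠ i → A i j ≤ 0)
    (hdom : ∀ i, ∑ j ∈ Finset.univ.erase i, |A i j| < A i i)
    (ε : ℕ → Fin n → ℝ)
    (hrec : ∀ k : ℕ, 1 ≤ k →
      (1 + (τ / 2) • A) *ᵥ ε k = (1 - (τ / 2) • A) *ᵥ ε (k - 1)) :
    (∀ k : ℕ, ‖ε k‖ ≤ (1 + Ca * τ) ^ k * ‖ε 0‖) ∧
      ∀ (T : ℝ) (k : ℕ), (k : ℝ) * τ ≤ T → ‖ε k‖ ≤ Real.exp (T * Ca) * ‖ε 0‖ := by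
  have hfac : (0:ℝ) < 1 + Ca * τ := by positivity
  have main : ∀ k : ℕ, ‖ε k‖ ≤ (1 + Ca * τ) ^ k * ‖ε 0‖ := by
    intro k
    induction k with
    | zero => simp
    | succ k ih =>
      have hstep := cn_step τ Ca hτ hCa A hdiag hdom (ε (k + 1)) (ε k)
        (by simpa using hrec (k + 1) (Nat.le_add_left 1 k))
      calc ‖ε (k + 1)‖ ≤ (1 + Ca * τ) * ‖ε k‖ := hstep
        _ ≤ (1 + Ca * τ) * ((1 + Ca * τ) ^ k * ‖ε 0‖) :=
            mul_le_mul_of_nonneg_left ih hfac.le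
        _ = (1 + Ca * τ) ^ (k + 1) * ‖ε 0‖ := by ring
  refine ⟨main, fun T k hk => ?_⟩
  calc ‖ε k‖ ≤ (1 + Ca * τ) ^ k * ‖ε 0‖ := main k
    _ ≤ Real.exp (T * Ca) * ‖ε 0‖ := by
        refine mul_le_mul_of_nonneg_right ?_ (norm_nonneg _)
        calc (1 + Ca * τ) ^ k ≤ (Real.exp (Ca * τ)) ^ k := by
              refine pow_le_pow_left₀ hfac.le ?_ k
              linarith [Real.add_one_le_exp (Ca * τ)]
          _ = Real.exp ((k : ℝ) * (Ca * τ)) := (Real.exp_nat_mul _ k).symm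
          _ ≤ Real.exp (T * Ca) := by
              apply Real.exp_le_exp.2
              nlinarith
end

section
/- Let n ∈ ℕ, τ > 0, T > 0, C_a > 0, ρ ≥ 0, and let A = (a_{ij}) be a real n × n matrix such that for every i: 0 < a_{ii} ≤ C_a, a_{ij} ≤ 0 for all j ≠ i, and Σ_{j ≠ i} |a_{ij}| < a_{ii}. Let (E^k)_{k ≥ 0} and (R^k)_{k ≥ 1} be vectors in ℝ^n with E^0 = 0, ‖R^k‖_∞ ≤ ρ for all k ≥ 1, and (I + (τ/2)A) E^k = (I − (τ/2)A) E^{k−1} + τ R^k for all k ≥ 1. Then for every k with kτ ≤ T, ‖E^k‖_∞ ≤ ρ T exp(T C_a). -/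
open Matrix

/-- Global error bound for the Crank–Nicolson scheme in 1D: under the structural
hypotheses on `A`, with `E^0 = 0`, truncation errors `‖R^k‖_∞ ≤ ρ`, and
`(I + (τ/2)A) E^k = (I − (τ/2)A) E^{k−1} + τ R^k` for `k ≥ 1`, one has
`‖E^k‖_∞ ≤ ρ T exp(T C_a)` whenever `kτ ≤ T`. -/
theorem stmt7 {n : ℕ} (τ T Ca ρ : ℝ) (hτ : 0 < τ) (hT : 0 < T) (hCa : 0 < Ca)
    (hρ : 0 ≤ ρ)
    (A : Matrix (Fin n) (Fin n) ℝ)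
    (hdiag : ∀ i, 0 < A i i ∧ A i i ≤ Ca)
    (hoff : ∀ i j, j ≠ i → A i j ≤ 0)
    (hdom : ∀ i, ∑ j ∈ Finset.univ.erase i, |A i j| < A i i)
    (E R : ℕ → Fin n → ℝ) (hE0 : E 0 = 0)
    (hR : ∀ k : ℕ, 1 ≤ k → ‖R k‖ ≤ ρ)
    (hrec : ∀ k : ℕ, 1 ≤ k →
      (1 + (τ / 2) • A) *ᵥ E k = (1 - (τ / 2) • A) *ᵥ E (k - 1) + τ • R k) :
    ∀ k : ℕ, (k : ℝ) * τ ≤ T → ‖E k‖ ≤ ρ * T * Real.exp (T * Ca) := by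
  -- Lemma 1 : left matrix does not shrink the sup norm
  have key1 : ∀ x : Fin n → ℝ, ‖x‖ ≤ ‖(1 + (τ / 2) • A) *ᵥ x‖ := by
    intro x
    rcases Nat.eq_zero_or_pos n with hn | hn
    · subst hn
      have : x = 0 := Subsingleton.elim _ _
      simp [this]
    · haveI : Nonempty (Fin n) := ⟨⟨0, hn⟩⟩
      obtain ⟨i, hi⟩ := Finite.exists_max (fun i => |x i|)
      have hnorm : ‖x‖ = |x i| := by
        apply le_antisymm
        · exact (pi_norm_le_iff_of_nonneg (abs_nonneg _)).mpr fun j => by simpa using hi j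
        · simpa using norm_le_pi_norm x i
      have hAx : (A *ᵥ x) i = ∑ j, A i j * x j := by simp [mulVec, dotProduct]
      have hBx : ((1 + (τ / 2) • A) *ᵥ x) i = x i + (τ/2) * ∑ j, A i j * x j := by
        rw [add_mulVec, one_mulVec, smul_mulVec, Pi.add_apply, Pi.smul_apply,
          smul_eq_mul, hAx]
      set s : ℝ := if 0 ≤ x i then 1 else -1 with hs
      have hsx : s * x i = |x i| := by
        rcases le_or_gt 0 (x i) with h | h
        · simp [hs, h, abs_of_nonneg h]
        · simp [hs, not_le.mpr h, abs_of_neg h]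
      have habs : |s| = 1 := by
        rcases le_or_gt 0 (x i) with h | h
        · simp [hs, h]
        · simp [hs, not_le.mpr h]
      have hsum : ∀ j, j ≠ i → A i j * |x i| ≤ A i j * (s * x j) := by
        intro j hj
        apply mul_le_mul_of_nonpos_left _ (hoff i j hj)
        calc s * x j ≤ |s * x j| := le_abs_self _
          _ = |x j| := by rw [abs_mul, habs, one_mul]
          _ ≤ |x i| := hi j
      have hsum2 : (A i i - ∑ j ∈ Finset.univ.erase i, |A i j|) * |x i|
          ≤ ∑ j, A i j * (s * x j) := by
        rw [← Finset.add_sum_erase Finset.univ _ (Finset.mem_univ i)]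
        rw [sub_mul, Finset.sum_mul]
        have h1 : A i i * |x i| ≤ A i i * (s * x i) := by rw [hsx]
        have h2 : -∑ j ∈ Finset.univ.erase i, |A i j| * |x i|
            ≤ ∑ j ∈ Finset.univ.erase i, A i j * (s * x j) := by
          rw [← Finset.sum_neg_distrib]
          apply Finset.sum_le_sum
          intro j hj
          have hji := (Finset.mem_erase.mp hj).1
          calc -(|A i j| * |x i|) = A i j * |x i| := by
                rw [abs_of_nonpos (hoff i j hji)]; ring
            _ ≤ A i j * (s * x j) := hsum j hji
        linarith
      have hpos : 0 ≤ (A i i - ∑ j ∈ Finset.univ.erase i, |A i j|) * |x i| :=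
        mul_nonneg (by linarith [hdom i]) (abs_nonneg _)
      have hfinal : |x i| ≤ s * (((1 + (τ / 2) • A) *ᵥ x) i) := by
        rw [hBx]
        have e : ∑ j, A i j * (s * x j) = s * ∑ j, A i j * x j := by
          rw [Finset.mul_sum]
          exact Finset.sum_congr rfl (fun j _ => by ring)
        have : s * (x i + τ/2 * ∑ j, A i j * x j)
            = |x i| + τ/2 * ∑ j, A i j * (s * x j) := by
          rw [e, ← hsx]; ring
        rw [this]
        nlinarith [hsum2, hpos]
      calc ‖x‖ = |x i| := hnorm
        _ ≤ s * (((1 + (τ / 2) • A) *ᵥ x) i) := hfinal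
        _ ≤ |s * (((1 + (τ / 2) • A) *ᵥ x) i)| := le_abs_self _
        _ = |((1 + (τ / 2) • A) *ᵥ x) i| := by rw [abs_mul, habs, one_mul]
        _ ≤ ‖(1 + (τ / 2) • A) *ᵥ x‖ := by
          simpa [Real.norm_eq_abs] using norm_le_pi_norm ((1 + (τ / 2) • A) *ᵥ x) i
  -- Lemma 2 : right matrix expands by at most (1 + τ Ca)
  have key2 : ∀ y : Fin n → ℝ, ‖(1 - (τ / 2) • A) *ᵥ y‖ ≤ (1 + τ * Ca) * ‖y‖ := by
    intro y
    have hr : 0 ≤ (1 + τ * Ca) * ‖y‖ :=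
      mul_nonneg (by nlinarith) (norm_nonneg _)
    apply (pi_norm_le_iff_of_nonneg hr).mpr
    intro i
    have hAy : (A *ᵥ y) i = ∑ j, A i j * y j := by simp [mulVec, dotProduct]
    have hBy : ((1 - (τ / 2) • A) *ᵥ y) i = y i - (τ/2) * ∑ j, A i j * y j := by
      rw [sub_mulVec, one_mulVec, smul_mulVec, Pi.sub_apply, Pi.smul_apply,
        smul_eq_mul, hAy]
    have hyj : ∀ j, |y j| ≤ ‖y‖ := fun j => by simpa using norm_le_pi_norm y j
    have hsumabs : |∑ j, A i j * y j| ≤ (2 * Ca) * ‖y‖ := by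
      calc |∑ j, A i j * y j| ≤ ∑ j, |A i j * y j| := Finset.abs_sum_le_sum_abs _ _
        _ = ∑ j, |A i j| * |y j| := by simp [abs_mul]
        _ ≤ ∑ j, |A i j| * ‖y‖ := by
            apply Finset.sum_le_sum
            intro j _
            exact mul_le_mul_of_nonneg_left (hyj j) (abs_nonneg _)
        _ = (∑ j, |A i j|) * ‖y‖ := by rw [Finset.sum_mul]
        _ ≤ (2 * Ca) * ‖y‖ := by
            apply mul_le_mul_of_nonneg_right _ (norm_nonneg _)
            rw [← Finset.add_sum_erase Finset.univ _ (Finset.mem_univ i)]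
            have := hdom i
            have h1 := (hdiag i).1
            have h2 := (hdiag i).2
            rw [abs_of_pos h1]
            linarith
    rw [Real.norm_eq_abs, hBy]
    calc |y i - τ/2 * ∑ j, A i j * y j|
        ≤ |y i| + |τ/2 * ∑ j, A i j * y j| := abs_sub _ _
      _ ≤ ‖y‖ + (τ/2) * ((2 * Ca) * ‖y‖) := by
          have : |τ/2 * ∑ j, A i j * y j| = (τ/2) * |∑ j, A i j * y j| := by
            rw [abs_mul, abs_of_pos (by linarith : (0:ℝ) < τ/2)]
          rw [this]
          have := mul_le_mul_of_nonneg_left hsumabs (by linarith : (0:ℝ) ≤ τ/2)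
          linarith [hyj i]
      _ = (1 + τ * Ca) * ‖y‖ := by ring
  -- one-step estimate
  have step : ∀ k : ℕ, 1 ≤ k → ‖E k‖ ≤ (1 + τ * Ca) * ‖E (k-1)‖ + τ * ρ := by
    intro k hk
    calc ‖E k‖ ≤ ‖(1 + (τ / 2) • A) *ᵥ E k‖ := key1 _
      _ = ‖(1 - (τ / 2) • A) *ᵥ E (k-1) + τ • R k‖ := by rw [hrec k hk]
      _ ≤ ‖(1 - (τ / 2) • A) *ᵥ E (k-1)‖ + ‖τ • R k‖ := norm_add_le _ _
      _ ≤ (1 + τ * Ca) * ‖E (k-1)‖ + τ * ρ := by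
          have h1 := key2 (E (k-1))
          have h2 : ‖τ • R k‖ = τ * ‖R k‖ := by
            rw [norm_smul, Real.norm_eq_abs, abs_of_pos hτ]
          have h3 := mul_le_mul_of_nonneg_left (hR k hk) (le_of_lt hτ)
          linarith
  -- induction : ‖E k‖ ≤ ρ * (k τ) * (1 + τ Ca)^k
  have hgeom : (0:ℝ) ≤ 1 + τ * Ca := by nlinarith
  have ind : ∀ k : ℕ, ‖E k‖ ≤ ρ * (k * τ) * (1 + τ * Ca)^k := by
    intro k
    induction k with
    | zero => simp [hE0]
    | succ m ih =>
      have hk1 : 1 ≤ m + 1 := Nat.le_add_left 1 m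
      have hs := step (m+1) hk1
      simp only [Nat.add_sub_cancel] at hs
      have h1 : (1 + τ * Ca) * ‖E m‖ ≤ (1 + τ * Ca) * (ρ * (m * τ) * (1 + τ * Ca)^m) :=
        mul_le_mul_of_nonneg_left ih hgeom
      have h2 : (1 + τ * Ca) * (ρ * (m * τ) * (1 + τ * Ca)^m)
          = ρ * (m * τ) * (1 + τ * Ca)^(m+1) := by ring
      have h3 : τ * ρ ≤ τ * ρ * (1 + τ * Ca)^(m+1) := by
        have hp : (1:ℝ) ≤ (1 + τ * Ca)^(m+1) :=
          one_le_pow₀ (by nlinarith)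
        nlinarith [mul_nonneg (le_of_lt hτ) hρ]
      have : ρ * ((m:ℝ) * τ) * (1 + τ * Ca)^(m+1) + τ * ρ * (1 + τ * Ca)^(m+1)
          = ρ * (((m:ℕ)+1 : ℝ) * τ) * (1 + τ * Ca)^(m+1) := by ring
      push_cast
      nlinarith [h1, h3]
  -- conclude
  intro k hkT
  have hk : (k:ℝ) * τ ≤ T := hkT
  have hkτ : 0 ≤ (k:ℝ) * τ := mul_nonneg (Nat.cast_nonneg k) (le_of_lt hτ)
  have hpow : (1 + τ * Ca)^k ≤ Real.exp (T * Ca) := by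
    have h1 : 1 + τ * Ca ≤ Real.exp (τ * Ca) := by
      have := Real.add_one_le_exp (τ * Ca)
      linarith
    have h2 : (1 + τ * Ca)^k ≤ (Real.exp (τ * Ca))^k :=
      pow_le_pow_left₀ hgeom h1 k
    have h3 : (Real.exp (τ * Ca))^k = Real.exp ((k:ℝ) * (τ * Ca)) := by
      rw [← Real.exp_nat_mul]
    rw [h3] at h2
    have h4 : (k:ℝ) * (τ * Ca) ≤ T * Ca := by
      have := mul_le_mul_of_nonneg_right hk (le_of_lt hCa)
      nlinarith
    exact h2.trans (Real.exp_le_exp.mpr h4)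
  have hexp : 0 < Real.exp (T * Ca) := Real.exp_pos _
  calc ‖E k‖ ≤ ρ * ((k:ℝ) * τ) * (1 + τ * Ca)^k := ind k
    _ ≤ ρ * T * Real.exp (T * Ca) := by
        have h5 : ρ * ((k:ℝ) * τ) ≤ ρ * T := mul_le_mul_of_nonneg_left hk hρ
        have h6 : ρ * ((k:ℝ) * τ) * (1 + τ * Ca)^k ≤ ρ * ((k:ℝ) * τ) * Real.exp (T * Ca) :=
          mul_le_mul_of_nonneg_left hpow (mul_nonneg hρ hkτ)
        have h7 : ρ * ((k:ℝ) * τ) * Real.exp (T * Ca) ≤ ρ * T * Real.exp (T * Ca) :=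
          mul_le_mul_of_nonneg_right h5 (le_of_lt hexp)
        linarith
end

section
/- Let D_x be a real n × n diagonal matrix with diagonal entries d_i^x > 0, D_y a real m × m diagonal matrix with diagonal entries d_j^y > 0, and let G_x (n × n) and G_y (m × m) have nonnegative entries with Σ_{l} (G_x)_{il} < d_i^x for every i and Σ_{r} (G_y)_{jr} < d_j^y for every j. Then the Kronecker-product matrix A = D_x ⊗ D_y − G_x ⊗ G_y is strictly diagonally dominant by rows; that is, for every pair (i, j), |d_i^x d_j^y − (G_x)_{ii}(G_y)_{jj}| > Σ_{(l,r) ≠ (i,j)} (G_x)_{il}(G_y)_{jr}. -/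
open Matrix
open scoped Kronecker

/-- If `D_x`, `D_y` are diagonal with positive diagonals, `G_x`, `G_y` are nonnegative
with row sums strictly below the corresponding diagonal entries, then
`A = D_x ⊗ D_y − G_x ⊗ G_y` is strictly diagonally dominant by rows. -/
theorem stmt8 {n m : ℕ} (dx : Fin n → ℝ) (dy : Fin m → ℝ)
    (Gx : Matrix (Fin n) (Fin n) ℝ) (Gy : Matrix (Fin m) (Fin m) ℝ)
    (hdx : ∀ i, 0 < dx i) (hdy : ∀ j, 0 < dy j)
    (hGx : ∀ i l, 0 ≤ Gx i l) (hGy : ∀ j r, 0 ≤ Gy j r)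
    (hGxs : ∀ i, ∑ l, Gx i l < dx i) (hGys : ∀ j, ∑ r, Gy j r < dy j) :
    ∀ p : Fin n × Fin m,
      ∑ q ∈ Finset.univ.erase p,
          |(Matrix.diagonal dx ⊗ₖ Matrix.diagonal dy - Gx ⊗ₖ Gy) p q|
        < |(Matrix.diagonal dx ⊗ₖ Matrix.diagonal dy - Gx ⊗ₖ Gy) p p| := by
  rintro ⟨i, j⟩
  have hSx : 0 ≤ ∑ l, Gx i l := Finset.sum_nonneg fun l _ => hGx i l
  have hSy : 0 ≤ ∑ r, Gy j r := Finset.sum_nonneg fun r _ => hGy j r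
  have hGii : Gx i i ≤ ∑ l, Gx i l :=
    Finset.single_le_sum (fun l _ => hGx i l) (Finset.mem_univ i)
  have hGjj : Gy j j ≤ ∑ r, Gy j r :=
    Finset.single_le_sum (fun r _ => hGy j r) (Finset.mem_univ j)
  have hdiag : (Matrix.diagonal dx ⊗ₖ Matrix.diagonal dy - Gx ⊗ₖ Gy) (i, j) (i, j)
      = dx i * dy j - Gx i i * Gy j j := by
    simp [Matrix.kroneckerMap_apply]
  have hsum : ∑ q ∈ Finset.univ.erase (i, j),
      |(Matrix.diagonal dx ⊗ₖ Matrix.diagonal dy - Gx ⊗ₖ Gy) (i, j) q|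
      = (∑ l, Gx i l) * (∑ r, Gy j r) - Gx i i * Gy j j := by
    have h1 : ∀ q ∈ Finset.univ.erase (i, j),
        |(Matrix.diagonal dx ⊗ₖ Matrix.diagonal dy - Gx ⊗ₖ Gy) (i, j) q|
        = Gx i q.1 * Gy j q.2 := by
      rintro ⟨l, r⟩ hq
      have hne : (l, r) ≠ (i, j) := Finset.ne_of_mem_erase hq
      have hz : Matrix.diagonal dx i l * Matrix.diagonal dy j r = 0 := by
        by_cases hl : i = l
        · have hr : j ≠ r := by
            subst hl; intro h; exact hne (by simp [h.symm])
          simp [Matrix.diagonal_apply_ne _ hr]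
        · simp [Matrix.diagonal_apply_ne _ hl]
      simp only [Matrix.sub_apply, Matrix.kroneckerMap_apply, hz, zero_sub, abs_neg]
      exact abs_of_nonneg (mul_nonneg (hGx i l) (hGy j r))
    rw [Finset.sum_congr rfl h1, Finset.sum_erase_eq_sub (Finset.mem_univ _)]
    congr 1
    rw [Fintype.sum_prod_type, ← Finset.sum_mul_sum]
  rw [hsum, hdiag]
  have hlt : (∑ l, Gx i l) * (∑ r, Gy j r) < dx i * dy j :=
    mul_lt_mul'' (hGxs i) (hGys j) hSx hSy
  calc (∑ l, Gx i l) * (∑ r, Gy j r) - Gx i i * Gy j j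
      < dx i * dy j - Gx i i * Gy j j := by linarith
    _ ≤ |dx i * dy j - Gx i i * Gy j j| := le_abs_self _
end

section
/- Let n, m ∈ ℕ, τ > 0, C_d > 0. Let D_x, D_y be diagonal matrices with diagonal entries d_i^x > 0 (i = 1, …, n) and d_j^y > 0 (j = 1, …, m), and let G_x, G_y have nonnegative entries with Σ_l (G_x)_{il} < d_i^x for all i, Σ_r (G_y)_{jr} < d_j^y for all j, and d_i^x d_j^y ≤ C_d for all (i, j). Set A = D_x ⊗ D_y − G_x ⊗ G_y. If (ε^k)_{k ≥ 0} are vectors in ℝ^{nm} satisfying (I + (τ/2)A) ε^k = (I − (τ/2)A) ε^{k−1} for all k ≥ 1, then ‖ε^k‖_∞ ≤ (1 + τ C_d)^k ‖ε^0‖_∞ for all k ≥ 0; in particular, if kτ ≤ T then ‖ε^k‖_∞ ≤ exp(T C_d) ‖ε^0‖_∞ (unconditional stability of the two-dimensional Crank–Nicolson scheme with multiplicative Cauchy kernel). -/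
open Matrix
open scoped Kronecker

set_option maxHeartbeats 1000000 in
lemma step_aux {ι : Type*} [Fintype ι] [DecidableEq ι] (τ Cd : ℝ) (hτ : 0 < τ) (hCd : 0 < Cd)
    (A : Matrix ι ι ℝ)
    (hoff : ∀ p q : ι, p ≠ q → A p q ≤ 0)
    (hrow : ∀ p : ι, 0 < ∑ q, A p q)
    (hdiag : ∀ p : ι, A p p ≤ Cd)
    (u v : ι → ℝ)
    (h : (1 + (τ/2) • A) *ᵥ u = (1 - (τ/2) • A) *ᵥ v) :
    ‖u‖ ≤ (1 + τ*Cd) * ‖v‖ := by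
  rcases isEmpty_or_nonempty ι with hι | hι
  · have hu : u = 0 := Subsingleton.elim _ _
    have hv0 : (0:ℝ) ≤ ‖v‖ := norm_nonneg _
    rw [hu, norm_zero]
    positivity
  · obtain ⟨p, hp⟩ := Finite.exists_max (fun q => |u q|)
    have hup : ‖u‖ = |u p| := by
      refine le_antisymm ?_ ?_
      · exact (pi_norm_le_iff_of_nonneg (abs_nonneg _)).2
          (fun q => by simpa [Real.norm_eq_abs] using hp q)
      · simpa [Real.norm_eq_abs] using norm_le_pi_norm u p
    set c := τ/2 with hc
    have hc0 : 0 < c := by positivity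
    have key := congrFun h p
    simp only [Matrix.add_mulVec, Matrix.sub_mulVec, Matrix.one_mulVec,
      Matrix.smul_mulVec, Pi.add_apply, Pi.sub_apply, Pi.smul_apply,
      smul_eq_mul] at key
    have hAu : (A *ᵥ u) p = ∑ q, A p q * u q := by
      simp [Matrix.mulVec, dotProduct]
    have hAv : (A *ᵥ v) p = ∑ q, A p q * v q := by
      simp [Matrix.mulVec, dotProduct]
    set Ru := ∑ q ∈ Finset.univ.erase p, A p q * u q with hRudef
    set Rv := ∑ q ∈ Finset.univ.erase p, A p q * v q with hRvdef
    set σ := ∑ q ∈ Finset.univ.erase p, -A p q with hσdef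
    have hsplitu : ∑ q, A p q * u q = A p p * u p + Ru :=
      (Finset.add_sum_erase _ _ (Finset.mem_univ p)).symm
    have hsplitv : ∑ q, A p q * v q = A p p * v p + Rv :=
      (Finset.add_sum_erase _ _ (Finset.mem_univ p)).symm
    have hσ0 : 0 ≤ σ := Finset.sum_nonneg fun q hq => by
      have := hoff p q (Ne.symm (Finset.ne_of_mem_erase hq))
      linarith
    have hrowsplit : ∑ q, A p q = A p p + ∑ q ∈ Finset.univ.erase p, A p q :=
      (Finset.add_sum_erase _ _ (Finset.mem_univ p)).symm
    have hσeq : σ = A p p - ∑ q, A p q := by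
      rw [hrowsplit, hσdef, Finset.sum_neg_distrib]; ring
    have hS : 0 < ∑ q, A p q := hrow p
    have hσα : σ < A p p := by rw [hσeq]; linarith
    have hα0 : 0 ≤ A p p := le_of_lt (lt_of_le_of_lt hσ0 hσα)
    have hαCd : A p p ≤ Cd := hdiag p
    have hRu : |Ru| ≤ σ * |u p| := by
      calc |Ru| ≤ ∑ q ∈ Finset.univ.erase p, |A p q * u q| :=
            Finset.abs_sum_le_sum_abs _ _
        _ ≤ ∑ q ∈ Finset.univ.erase p, (-A p q) * |u p| := by
            refine Finset.sum_le_sum fun q hq => ?_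
            have h1 : A p q ≤ 0 := hoff p q (Ne.symm (Finset.ne_of_mem_erase hq))
            rw [abs_mul, abs_of_nonpos h1]
            exact mul_le_mul_of_nonneg_left (hp q) (by linarith)
        _ = σ * |u p| := by rw [Finset.sum_mul]
    have hvb : ∀ q, |v q| ≤ ‖v‖ := fun q => by
      simpa [Real.norm_eq_abs] using norm_le_pi_norm v q
    have hRv : |Rv| ≤ σ * ‖v‖ := by
      calc |Rv| ≤ ∑ q ∈ Finset.univ.erase p, |A p q * v q| :=
            Finset.abs_sum_le_sum_abs _ _
        _ ≤ ∑ q ∈ Finset.univ.erase p, (-A p q) * ‖v‖ := by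
            refine Finset.sum_le_sum fun q hq => ?_
            have h1 : A p q ≤ 0 := hoff p q (Ne.symm (Finset.ne_of_mem_erase hq))
            rw [abs_mul, abs_of_nonpos h1]
            exact mul_le_mul_of_nonneg_left (hvb q) (by linarith)
        _ = σ * ‖v‖ := by rw [Finset.sum_mul]
    -- key equation in split form
    rw [hAu, hAv, hsplitu, hsplitv] at key
    -- key : u p + c * (A p p * u p + Ru) = v p - c * (A p p * v p + Rv)
    have hvn : (0:ℝ) ≤ ‖v‖ := norm_nonneg _
    have lower : (1 + c * (A p p - σ)) * |u p| ≤ |u p + c * (A p p * u p + Ru)| := by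
      have h2 : |(1 + c * A p p) * u p| = (1 + c * A p p) * |u p| := by
        rw [abs_mul, abs_of_nonneg (by nlinarith [mul_nonneg hc0.le hα0])]
      have h3 : |(1 + c * A p p) * u p| ≤ |u p + c * (A p p * u p + Ru)| + |c * Ru| := by
        calc |(1 + c * A p p) * u p|
            = |(u p + c * (A p p * u p + Ru)) + (-(c * Ru))| := by ring_nf
          _ ≤ _ := by
              have := abs_add_le (u p + c * (A p p * u p + Ru)) (-(c * Ru))
              simpa [abs_neg] using this
      have h4 : |c * Ru| ≤ c * (σ * |u p|) := by
        rw [abs_mul, abs_of_pos hc0]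
        exact mul_le_mul_of_nonneg_left hRu (le_of_lt hc0)
      linarith [h2, h3, h4]
    have upper : |v p - c * (A p p * v p + Rv)| ≤ (1 + τ * Cd) * ‖v‖ := by
      have h5 : |v p - c * (A p p * v p + Rv)| ≤ |(1 - c * A p p) * v p| + |c * Rv| := by
        calc |v p - c * (A p p * v p + Rv)|
            = |(1 - c * A p p) * v p + (-(c * Rv))| := by ring_nf
          _ ≤ _ := by
              have := abs_add_le ((1 - c * A p p) * v p) (-(c * Rv))
              simpa [abs_neg] using this
      have h6 : |(1 - c * A p p) * v p| ≤ (1 + c * A p p) * ‖v‖ := by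
        rw [abs_mul]
        have h7 : |1 - c * A p p| ≤ 1 + c * A p p := by
          rw [abs_le]; constructor <;> linarith [mul_nonneg hc0.le hα0]
        exact mul_le_mul h7 (hvb p) (abs_nonneg _) (by linarith [mul_nonneg hc0.le hα0])
      have h8 : |c * Rv| ≤ c * (σ * ‖v‖) := by
        rw [abs_mul, abs_of_pos hc0]
        exact mul_le_mul_of_nonneg_left hRv (le_of_lt hc0)
      have hcs : c * A p p + c * σ ≤ τ * Cd := by
        have h12 : 2 * c = τ := by rw [hc]; ring
        nlinarith [mul_le_mul_of_nonneg_left hαCd hτ.le]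
      linarith [h5, h6, h8, mul_le_mul_of_nonneg_right hcs hvn]
    have hfinal : |u p| ≤ (1 + τ * Cd) * ‖v‖ := by
      have h9 : (1:ℝ) ≤ 1 + c * (A p p - σ) := by
        linarith [mul_pos hc0 (sub_pos.2 hσα)]
      have h10 : |u p| ≤ (1 + c * (A p p - σ)) * |u p| := by
        linarith [mul_le_mul_of_nonneg_right h9 (abs_nonneg (u p)), one_mul |u p|]
      calc |u p| ≤ (1 + c * (A p p - σ)) * |u p| := h10
        _ ≤ |u p + c * (A p p * u p + Ru)| := lower
        _ = |v p - c * (A p p * v p + Rv)| := by rw [key]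
        _ ≤ (1 + τ * Cd) * ‖v‖ := upper
    rw [hup]; exact hfinal

open Matrix
open scoped Kronecker

/-- Unconditional stability of the two-dimensional Crank–Nicolson scheme with
multiplicative Cauchy kernel: with `A = D_x ⊗ D_y − G_x ⊗ G_y` under the stated
structural hypotheses and `(I + (τ/2)A) ε^k = (I − (τ/2)A) ε^{k−1}` for `k ≥ 1`,
`‖ε^k‖_∞ ≤ (1 + τ C_d)^k ‖ε^0‖_∞`, and `‖ε^k‖_∞ ≤ exp(T C_d) ‖ε^0‖_∞` if `kτ ≤ T`. -/
theorem stmt10 {n m : ℕ} (τ Cd : ℝ) (hτ : 0 < τ) (hCd : 0 < Cd)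
    (dx : Fin n → ℝ) (dy : Fin m → ℝ)
    (Gx : Matrix (Fin n) (Fin n) ℝ) (Gy : Matrix (Fin m) (Fin m) ℝ)
    (hdx : ∀ i, 0 < dx i) (hdy : ∀ j, 0 < dy j)
    (hGx : ∀ i l, 0 ≤ Gx i l) (hGy : ∀ j r, 0 ≤ Gy j r)
    (hGxs : ∀ i, ∑ l, Gx i l < dx i) (hGys : ∀ j, ∑ r, Gy j r < dy j)
    (hprod : ∀ i j, dx i * dy j ≤ Cd)
    (ε : ℕ → Fin n × Fin m → ℝ)
    (hrec : ∀ k : ℕ, 1 ≤ k →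
      (1 + (τ / 2) • (Matrix.diagonal dx ⊗ₖ Matrix.diagonal dy - Gx ⊗ₖ Gy)) *ᵥ ε k
        = (1 - (τ / 2) • (Matrix.diagonal dx ⊗ₖ Matrix.diagonal dy - Gx ⊗ₖ Gy)) *ᵥ
            ε (k - 1)) :
    (∀ k : ℕ, ‖ε k‖ ≤ (1 + τ * Cd) ^ k * ‖ε 0‖) ∧
      ∀ (T : ℝ) (k : ℕ), (k : ℝ) * τ ≤ T → ‖ε k‖ ≤ Real.exp (T * Cd) * ‖ε 0‖ := by
  set A : Matrix (Fin n × Fin m) (Fin n × Fin m) ℝ :=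
    Matrix.diagonal dx ⊗ₖ Matrix.diagonal dy - Gx ⊗ₖ Gy with hA
  have hentry : ∀ p q : Fin n × Fin m,
      A p q = Matrix.diagonal dx p.1 q.1 * Matrix.diagonal dy p.2 q.2
        - Gx p.1 q.1 * Gy p.2 q.2 := by
    intro p q
    simp [hA, Matrix.kroneckerMap_apply, Matrix.sub_apply]
  have hoff : ∀ p q : Fin n × Fin m, p ≠ q → A p q ≤ 0 := by
    rintro ⟨i, j⟩ ⟨l, r⟩ hne
    rw [hentry]
    have hd : Matrix.diagonal dx i l * Matrix.diagonal dy j r = 0 := by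
      by_cases hil : i = l
      · have hjr : j ≠ r := by
          intro hjr; exact hne (by simp [hil, hjr])
        rw [Matrix.diagonal_apply_ne _ hjr]; ring
      · rw [Matrix.diagonal_apply_ne _ hil]; ring
    simp only [hd]
    have := mul_nonneg (hGx i l) (hGy j r)
    linarith
  have hrow : ∀ p : Fin n × Fin m, 0 < ∑ q, A p q := by
    rintro ⟨i, j⟩
    have hsum : ∑ q : Fin n × Fin m, A (i, j) q
        = dx i * dy j - (∑ l, Gx i l) * (∑ r, Gy j r) := by
      rw [Fintype.sum_prod_type]
      simp only [hentry, Finset.sum_sub_distrib]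
      rw [← Finset.sum_mul_sum, ← Finset.sum_mul_sum]
      congr 1
      simp [Matrix.diagonal_apply, Finset.sum_ite_eq]
    rw [hsum]
    have h1 := hGxs i
    have h2 := hGys j
    have h3 : 0 ≤ ∑ l, Gx i l := Finset.sum_nonneg fun l _ => hGx i l
    have h4 : 0 ≤ ∑ r, Gy j r := Finset.sum_nonneg fun r _ => hGy j r
    nlinarith [hdx i, hdy j]
  have hdiagCd : ∀ p : Fin n × Fin m, A p p ≤ Cd := by
    rintro ⟨i, j⟩
    rw [hentry]
    simp only [Matrix.diagonal_apply_eq]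
    have := mul_nonneg (hGx i i) (hGy j j)
    have := hprod i j
    linarith
  have hstep : ∀ k : ℕ, ‖ε (k + 1)‖ ≤ (1 + τ * Cd) * ‖ε k‖ := by
    intro k
    have h := hrec (k + 1) (by omega)
    simp only [Nat.add_sub_cancel] at h
    exact step_aux τ Cd hτ hCd A hoff hrow hdiagCd (ε (k+1)) (ε k) h
  have hpos : (0:ℝ) < 1 + τ * Cd := by nlinarith
  have hpow : ∀ k : ℕ, ‖ε k‖ ≤ (1 + τ * Cd) ^ k * ‖ε 0‖ := by
    intro k
    induction k with
    | zero => simp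
    | succ k ih =>
        calc ‖ε (k + 1)‖ ≤ (1 + τ * Cd) * ‖ε k‖ := hstep k
          _ ≤ (1 + τ * Cd) * ((1 + τ * Cd) ^ k * ‖ε 0‖) :=
              mul_le_mul_of_nonneg_left ih hpos.le
          _ = (1 + τ * Cd) ^ (k + 1) * ‖ε 0‖ := by ring
  refine ⟨hpow, fun T k hk => ?_⟩
  calc ‖ε k‖ ≤ (1 + τ * Cd) ^ k * ‖ε 0‖ := hpow k
    _ ≤ Real.exp (T * Cd) * ‖ε 0‖ := by
        apply mul_le_mul_of_nonneg_right _ (norm_nonneg _)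
        calc (1 + τ * Cd) ^ k ≤ (Real.exp (τ * Cd)) ^ k := by
              apply pow_le_pow_left₀ hpos.le
              linarith [Real.add_one_le_exp (τ * Cd)]
          _ = Real.exp ((k : ℝ) * (τ * Cd)) := by
              rw [← Real.exp_nat_mul]
          _ ≤ Real.exp (T * Cd) := by
              apply Real.exp_le_exp.2
              have : (k : ℝ) * (τ * Cd) = ((k : ℝ) * τ) * Cd := by ring
              rw [this]
              exact mul_le_mul_of_nonneg_right hk hCd.le
end

section
/- Let n, m ∈ ℕ, τ > 0, T > 0, C_d > 0, ρ ≥ 0. Let D_x, D_y be diagonal matrices with diagonal entries d_i^x > 0 and d_j^y > 0, and let G_x, G_y have nonnegative entries with Σ_l (G_x)_{il} < d_i^x for all i, Σ_r (G_y)_{jr} < d_j^y for all j, and d_i^x d_j^y ≤ C_d for all (i, j). Set A = D_x ⊗ D_y − G_x ⊗ G_y. If (E^k)_{k ≥ 0} and (R^k)_{k ≥ 1} are vectors in ℝ^{nm} with E^0 = 0, ‖R^k‖_∞ ≤ ρ for all k ≥ 1, and (I + (τ/2)A) E^k = (I − (τ/2)A) E^{k−1} + τ R^k for all k ≥ 1,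 then for every k with kτ ≤ T, ‖E^k‖_∞ ≤ ρ T exp(T C_d). -/
open Matrix
open scoped Kronecker

private lemma cn_step_s11 {n m : ℕ} (τ Cd ρ : ℝ) (hτ : 0 < τ) (hCd : 0 < Cd) (hρ : 0 ≤ ρ)
    (dx : Fin n → ℝ) (dy : Fin m → ℝ)
    (Gx : Matrix (Fin n) (Fin n) ℝ) (Gy : Matrix (Fin m) (Fin m) ℝ)
    (hdx : ∀ i, 0 < dx i) (hdy : ∀ j, 0 < dy j)
    (hGx : ∀ i l, 0 ≤ Gx i l) (hGy : ∀ j r, 0 ≤ Gy j r)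
    (hGxs : ∀ i, ∑ l, Gx i l < dx i) (hGys : ∀ j, ∑ r, Gy j r < dy j)
    (hprod : ∀ i j, dx i * dy j ≤ Cd)
    (u w r : Fin n × Fin m → ℝ)
    (hr : ‖r‖ ≤ ρ)
    (hrec : (1 + (τ / 2) • (Matrix.diagonal dx ⊗ₖ Matrix.diagonal dy - Gx ⊗ₖ Gy)) *ᵥ u
        = (1 - (τ / 2) • (Matrix.diagonal dx ⊗ₖ Matrix.diagonal dy - Gx ⊗ₖ Gy)) *ᵥ w
          + τ • r) :
    ‖u‖ ≤ (1 + τ * Cd) * ‖w‖ + τ * ρ := by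
  have hW : (0:ℝ) ≤ ‖w‖ := norm_nonneg _
  have hrhs : (0:ℝ) ≤ (1 + τ * Cd) * ‖w‖ + τ * ρ := by positivity
  rcases isEmpty_or_nonempty (Fin n × Fin m) with hIE | hNE
  · have : u = 0 := Subsingleton.elim u 0
    simpa [this] using hrhs
  obtain ⟨p, -, hpmax⟩ := Finset.exists_max_image Finset.univ (fun q => |u q|)
    ⟨Classical.arbitrary _, Finset.mem_univ _⟩
  set c : ℝ := τ / 2 with hc
  have hc0 : 0 < c := by positivity
  -- componentwise equation
  have hcomp := congrFun hrec p
  simp only [add_mulVec, sub_mulVec, one_mulVec, smul_mulVec, Pi.add_apply,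
    Pi.sub_apply, Pi.smul_apply, smul_eq_mul] at hcomp
  have hDv : ∀ v : Fin n × Fin m → ℝ,
      ((Matrix.diagonal dx ⊗ₖ Matrix.diagonal dy) *ᵥ v) p = dx p.1 * dy p.2 * v p := by
    intro v
    rw [Matrix.diagonal_kronecker_diagonal, mulVec_diagonal]
  rw [hDv u, hDv w] at hcomp
  set dp : ℝ := dx p.1 * dy p.2 with hdp
  set gp : ℝ := (∑ l, Gx p.1 l) * (∑ s, Gy p.2 s) with hgp
  have hG0 : ∀ q : Fin n × Fin m, 0 ≤ (Gx ⊗ₖ Gy) p q := fun q =>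
    mul_nonneg (hGx _ _) (hGy _ _)
  have hgsum : ∑ q : Fin n × Fin m, (Gx ⊗ₖ Gy) p q = gp := by
    rw [hgp, Finset.sum_mul_sum, ← Finset.univ_product_univ, Finset.sum_product]
    rfl
  have hgp0 : 0 ≤ gp := hgsum ▸ Finset.sum_nonneg fun q _ => hG0 q
  have hgpd : gp < dp := by
    rw [hgp, hdp]
    exact mul_lt_mul'' (hGxs _) (hGys _)
      (Finset.sum_nonneg fun l _ => hGx _ _) (Finset.sum_nonneg fun s _ => hGy _ _)
  have hdpCd : dp ≤ Cd := hprod _ _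
  have hdp0 : 0 < dp := mul_pos (hdx _) (hdy _)
  set M : ℝ := |u p| with hM
  have hM0 : 0 ≤ M := abs_nonneg _
  have hSbd : ∀ (v : Fin n × Fin m → ℝ) (b : ℝ), (∀ q, |v q| ≤ b) →
      |((Gx ⊗ₖ Gy) *ᵥ v) p| ≤ gp * b := by
    intro v b hb
    have h1 : ((Gx ⊗ₖ Gy) *ᵥ v) p = ∑ q, (Gx ⊗ₖ Gy) p q * v q := rfl
    rw [h1, ← hgsum, Finset.sum_mul]
    refine (Finset.abs_sum_le_sum_abs _ _).trans (Finset.sum_le_sum fun q _ => ?_)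
    rw [abs_mul, abs_of_nonneg (hG0 q)]
    exact mul_le_mul_of_nonneg_left (hb q) (hG0 q)
  have hwq : ∀ q, |w q| ≤ ‖w‖ := fun q => by
    simpa [Real.norm_eq_abs] using norm_le_pi_norm w q
  have hSu : |((Gx ⊗ₖ Gy) *ᵥ u) p| ≤ gp * M := hSbd u M fun q => hpmax q (Finset.mem_univ q)
  have hSw : |((Gx ⊗ₖ Gy) *ᵥ w) p| ≤ gp * ‖w‖ := hSbd w ‖w‖ hwq
  have hrp : |r p| ≤ ρ := le_trans (by simpa [Real.norm_eq_abs] using norm_le_pi_norm r p) hr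
  -- rearranged equation
  have heq : (1 + c * dp) * u p
      = c * ((Gx ⊗ₖ Gy) *ᵥ u) p + (1 - c * dp) * w p + c * ((Gx ⊗ₖ Gy) *ᵥ w) p + τ * r p := by
    linarith [hcomp]
  have hMle : M ≤ (1 + τ * Cd) * ‖w‖ + τ * ρ := by
    have habs : (1 + c * dp) * M ≤ c * (gp * M) + |1 - c * dp| * ‖w‖ + c * (gp * ‖w‖) + τ * ρ := by
      have h2 : (1 + c * dp) * M = |(1 + c * dp) * u p| := by
        rw [abs_mul, abs_of_pos (by nlinarith)]
      rw [h2, heq]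
      have := abs_add_le (c * ((Gx ⊗ₖ Gy) *ᵥ u) p + (1 - c * dp) * w p + c * ((Gx ⊗ₖ Gy) *ᵥ w) p) (τ * r p)
      have h3 := abs_add_le (c * ((Gx ⊗ₖ Gy) *ᵥ u) p + (1 - c * dp) * w p) (c * ((Gx ⊗ₖ Gy) *ᵥ w) p)
      have h4 := abs_add_le (c * ((Gx ⊗ₖ Gy) *ᵥ u) p) ((1 - c * dp) * w p)
      have e1 : |c * ((Gx ⊗ₖ Gy) *ᵥ u) p| ≤ c * (gp * M) := by
        rw [abs_mul, abs_of_pos hc0]; exact mul_le_mul_of_nonneg_left hSu hc0.le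
      have e2 : |c * ((Gx ⊗ₖ Gy) *ᵥ w) p| ≤ c * (gp * ‖w‖) := by
        rw [abs_mul, abs_of_pos hc0]; exact mul_le_mul_of_nonneg_left hSw hc0.le
      have e3 : |(1 - c * dp) * w p| ≤ |1 - c * dp| * ‖w‖ := by
        rw [abs_mul]; exact mul_le_mul_of_nonneg_left (hwq p) (abs_nonneg _)
      have e4 : |τ * r p| ≤ τ * ρ := by
        rw [abs_mul, abs_of_pos hτ]; exact mul_le_mul_of_nonneg_left hrp hτ.le
      linarith
    have hτCd : τ * Cd = 2 * (c * Cd) := by rw [hc]; ring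
    rw [hτCd]
    have k1 : c * gp * M ≤ c * dp * M :=
      mul_le_mul_of_nonneg_right (mul_le_mul_of_nonneg_left hgpd.le hc0.le) hM0
    have k2 : c * gp * ‖w‖ ≤ c * dp * ‖w‖ :=
      mul_le_mul_of_nonneg_right (mul_le_mul_of_nonneg_left hgpd.le hc0.le) hW
    have k5 : c * dp * ‖w‖ ≤ c * Cd * ‖w‖ :=
      mul_le_mul_of_nonneg_right (mul_le_mul_of_nonneg_left hdpCd hc0.le) hW
    have k4 : 0 ≤ c * Cd * ‖w‖ := by positivity
    rcases abs_cases (1 - c * dp) with ⟨ha, hb⟩ | ⟨ha, hb⟩ <;> rw [ha] at habs <;> linarith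
  refine (pi_norm_le_iff_of_nonneg hrhs).2 fun q => ?_
  calc ‖u q‖ = |u q| := Real.norm_eq_abs _
    _ ≤ M := hpmax q (Finset.mem_univ q)
    _ ≤ _ := hMle

/-- Global error bound for the two-dimensional Crank–Nicolson scheme with
multiplicative Cauchy kernel: with `A = D_x ⊗ D_y − G_x ⊗ G_y` under the stated
structural hypotheses, `E^0 = 0`, `‖R^k‖_∞ ≤ ρ`, and
`(I + (τ/2)A) E^k = (I − (τ/2)A) E^{k−1} + τ R^k` for `k ≥ 1`, one has
`‖E^k‖_∞ ≤ ρ T exp(T C_d)` whenever `kτ ≤ T`. -/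
theorem stmt11 {n m : ℕ} (τ T Cd ρ : ℝ) (hτ : 0 < τ) (hT : 0 < T) (hCd : 0 < Cd)
    (hρ : 0 ≤ ρ)
    (dx : Fin n → ℝ) (dy : Fin m → ℝ)
    (Gx : Matrix (Fin n) (Fin n) ℝ) (Gy : Matrix (Fin m) (Fin m) ℝ)
    (hdx : ∀ i, 0 < dx i) (hdy : ∀ j, 0 < dy j)
    (hGx : ∀ i l, 0 ≤ Gx i l) (hGy : ∀ j r, 0 ≤ Gy j r)
    (hGxs : ∀ i, ∑ l, Gx i l < dx i) (hGys : ∀ j, ∑ r, Gy j r < dy j)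
    (hprod : ∀ i j, dx i * dy j ≤ Cd)
    (E R : ℕ → Fin n × Fin m → ℝ) (hE0 : E 0 = 0)
    (hR : ∀ k : ℕ, 1 ≤ k → ‖R k‖ ≤ ρ)
    (hrec : ∀ k : ℕ, 1 ≤ k →
      (1 + (τ / 2) • (Matrix.diagonal dx ⊗ₖ Matrix.diagonal dy - Gx ⊗ₖ Gy)) *ᵥ E k
        = (1 - (τ / 2) • (Matrix.diagonal dx ⊗ₖ Matrix.diagonal dy - Gx ⊗ₖ Gy)) *ᵥ
            E (k - 1) + τ • R k) :
    ∀ k : ℕ, (k : ℝ) * τ ≤ T → ‖E k‖ ≤ ρ * T * Real.exp (T * Cd) := by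
  have hx : (0:ℝ) ≤ 1 + τ * Cd := by positivity
  have bound : ∀ k : ℕ, ‖E k‖ ≤ ρ * ((k : ℝ) * τ) * (1 + τ * Cd) ^ k := by
    intro k
    induction k with
    | zero => simp [hE0]
    | succ k ih =>
      have h1 : ‖E (k + 1)‖ ≤ (1 + τ * Cd) * ‖E k‖ + τ * ρ := by
        have := cn_step_s11 τ Cd ρ hτ hCd hρ dx dy Gx Gy hdx hdy hGx hGy hGxs hGys hprod
          (E (k+1)) (E k) (R (k+1)) (hR (k+1) (by omega))
          (by simpa using hrec (k+1) (by omega))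
        exact this
      have hpow1 : (1:ℝ) ≤ (1 + τ * Cd) ^ (k + 1) :=
        one_le_pow₀ (by nlinarith)
      have hpow0 : (0:ℝ) ≤ (1 + τ * Cd) ^ k := by positivity
      have h2 : ‖E k‖ ≤ ρ * ((k : ℝ) * τ) * (1 + τ * Cd) ^ k := ih
      have h3 : (1 + τ * Cd) * ‖E k‖ ≤ (1 + τ * Cd) * (ρ * ((k : ℝ) * τ) * (1 + τ * Cd) ^ k) :=
        mul_le_mul_of_nonneg_left h2 hx
      have h4 : (1 + τ * Cd) * (ρ * ((k : ℝ) * τ) * (1 + τ * Cd) ^ k) + τ * ρ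
          ≤ ρ * (((k : ℝ) + 1) * τ) * (1 + τ * Cd) ^ (k + 1) := by
        have e : (1 + τ * Cd) * (ρ * ((k : ℝ) * τ) * (1 + τ * Cd) ^ k)
            = ρ * ((k : ℝ) * τ) * (1 + τ * Cd) ^ (k + 1) := by ring
        rw [e]
        have hkτ : (0:ℝ) ≤ ρ * τ := mul_nonneg hρ hτ.le
        nlinarith [mul_le_mul_of_nonneg_left hpow1 hkτ]
      calc ‖E (k + 1)‖ ≤ (1 + τ * Cd) * ‖E k‖ + τ * ρ := h1
        _ ≤ (1 + τ * Cd) * (ρ * ((k : ℝ) * τ) * (1 + τ * Cd) ^ k) + τ * ρ := by linarith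
        _ ≤ ρ * (((k : ℝ) + 1) * τ) * (1 + τ * Cd) ^ (k + 1) := h4
        _ = ρ * (((k + 1 : ℕ) : ℝ) * τ) * (1 + τ * Cd) ^ (k + 1) := by push_cast; ring
  intro k hkT
  refine (bound k).trans ?_
  have hpw : (1 + τ * Cd) ^ k ≤ Real.exp (T * Cd) := by
    calc (1 + τ * Cd) ^ k ≤ (Real.exp (τ * Cd)) ^ k := by
          exact pow_le_pow_left₀ hx (by linarith [Real.add_one_le_exp (τ * Cd)]) k
      _ = Real.exp ((k : ℝ) * (τ * Cd)) := by rw [← Real.exp_nat_mul]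
      _ ≤ Real.exp (T * Cd) := by
          apply Real.exp_le_exp.2
          have : (k : ℝ) * (τ * Cd) = ((k : ℝ) * τ) * Cd := by ring
          rw [this]
          exact mul_le_mul_of_nonneg_right hkT hCd.le
  have hkτ0 : (0:ℝ) ≤ (k : ℝ) * τ := by positivity
  calc ρ * ((k : ℝ) * τ) * (1 + τ * Cd) ^ k ≤ ρ * T * Real.exp (T * Cd) := by
        apply mul_le_mul
        · exact mul_le_mul_of_nonneg_left hkT hρ
        · exact hpw
        · positivity
        · positivity
end

section
/- Let n ∈ ℕ, C_d > 0, and 0 < τ < 1/(10 C_d). Let A = D − G be a real n × n matrix where D is diagonal with entries 0 < d_i ≤ C_d and G = (g_{ij}) satisfies Σ_j |g_{ij}| ≤ 9 C_d for every row i. If (ε^k)_{k ≥ 0} are vectors in ℝ^n satisfying (I + (τ/2)A) ε^k = (I − (τ/2)A) ε^{k−1} for all k ≥ 1, then for every k ≥ 0, ‖ε^k‖_∞ ≤ ((1 + 5τ C_d)/(1 − 5τ C_d))^k ‖ε^0‖_∞ (stability of the Crank–Nicolson scheme for the two-dimensional nonlocal problem with additive Cauchy kernel). -/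
open Matrix

private lemma stmt13_aux (τ Cd a W Vi V : ℝ) (hτ0 : 0 < τ) (hCd : 0 < Cd)
    (hτCd : 10 * (τ * Cd) < 1) (ha0 : 0 ≤ a) (haCd : a ≤ τ / 2 * Cd)
    (hW : 0 ≤ W) (hVi : 0 ≤ Vi) (hViV : Vi ≤ V)
    (hmain : (1 + a) * W - τ / 2 * (9 * Cd * W) ≤ (1 - a) * Vi + τ / 2 * (9 * Cd * V)) :
    (1 - 5 * τ * Cd) * W ≤ (1 + 5 * τ * Cd) * V := by
  have hV : 0 ≤ V := hVi.trans hViV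
  have ha1 : a ≤ 1 := by nlinarith
  nlinarith [mul_nonneg ha0 hW, mul_le_mul_of_nonneg_left hViV (by linarith : (0:ℝ) ≤ 1 - a),
    mul_nonneg ha0 hV, mul_nonneg (mul_nonneg hτ0.le hCd.le) hV,
    mul_nonneg (mul_nonneg hτ0.le hCd.le) hW]

/-- Stability of the Crank–Nicolson scheme for the two-dimensional nonlocal problem
with additive Cauchy kernel: if `A = D − G` with `0 < d_i ≤ C_d` and row absolute
sums of `G` at most `9 C_d`, and `0 < τ < 1/(10 C_d)`, then the Crank–Nicolson
iteration satisfies `‖ε^k‖_∞ ≤ ((1 + 5τ C_d)/(1 − 5τ C_d))^k ‖ε^0‖_∞`. -/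
theorem stmt13 {n : ℕ} (τ Cd : ℝ) (hCd : 0 < Cd) (hτ0 : 0 < τ)
    (hτ : τ < 1 / (10 * Cd))
    (d : Fin n → ℝ) (G : Matrix (Fin n) (Fin n) ℝ)
    (hd : ∀ i, 0 < d i ∧ d i ≤ Cd)
    (hG : ∀ i, ∑ j, |G i j| ≤ 9 * Cd)
    (ε : ℕ → Fin n → ℝ)
    (hrec : ∀ k : ℕ, 1 ≤ k →
      (1 + (τ / 2) • (Matrix.diagonal d - G)) *ᵥ ε k
        = (1 - (τ / 2) • (Matrix.diagonal d - G)) *ᵥ ε (k - 1)) :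
    ∀ k : ℕ, ‖ε k‖ ≤ ((1 + 5 * τ * Cd) / (1 - 5 * τ * Cd)) ^ k * ‖ε 0‖ := by
  have hτCd : 10 * (τ * Cd) < 1 := by
    have h10 : (0:ℝ) < 10 * Cd := by positivity
    have := (lt_div_iff₀ h10).mp hτ
    nlinarith
  have hden : (0:ℝ) < 1 - 5 * τ * Cd := by nlinarith
  set ρ : ℝ := (1 + 5 * τ * Cd) / (1 - 5 * τ * Cd) with hρ
  have hρ0 : 0 ≤ ρ := by
    apply div_nonneg _ hden.le
    nlinarith [mul_pos hτ0 hCd]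
  -- one-step bound
  have key : ∀ v w : Fin n → ℝ,
      (1 + (τ / 2) • (Matrix.diagonal d - G)) *ᵥ w
        = (1 - (τ / 2) • (Matrix.diagonal d - G)) *ᵥ v →
      ‖w‖ ≤ ρ * ‖v‖ := by
    intro v w heq
    rcases isEmpty_or_nonempty (Fin n) with hE | hNE
    · have hw : w = 0 := Subsingleton.elim _ _
      have : ‖w‖ = 0 := by rw [hw]; simp
      rw [this]
      positivity
    · obtain ⟨i, hi⟩ := Finite.exists_max fun j => ‖w j‖
      have hrow := congrFun heq i
      simp only [Matrix.add_mulVec, Matrix.sub_mulVec, Matrix.one_mulVec,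
        Matrix.smul_mulVec, Pi.add_apply, Pi.sub_apply, Pi.smul_apply,
        Matrix.mulVec_diagonal, smul_eq_mul] at hrow
      rw [show (G *ᵥ w) i = ∑ j, G i j * w j from rfl,
        show (G *ᵥ v) i = ∑ j, G i j * v j from rfl] at hrow
      have hGw : |∑ j, G i j * w j| ≤ 9 * Cd * |w i| := by
        calc |∑ j, G i j * w j| ≤ ∑ j, |G i j * w j| := Finset.abs_sum_le_sum_abs _ _
          _ ≤ ∑ j, |G i j| * |w i| := by
              apply Finset.sum_le_sum
              intro j _
              rw [abs_mul]
              exact mul_le_mul_of_nonneg_left (hi j) (abs_nonneg _)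
          _ = (∑ j, |G i j|) * |w i| := by rw [Finset.sum_mul]
          _ ≤ 9 * Cd * |w i| := mul_le_mul_of_nonneg_right (hG i) (abs_nonneg _)
      have hGv : |∑ j, G i j * v j| ≤ 9 * Cd * ‖v‖ := by
        calc |∑ j, G i j * v j| ≤ ∑ j, |G i j * v j| := Finset.abs_sum_le_sum_abs _ _
          _ ≤ ∑ j, |G i j| * ‖v‖ := by
              apply Finset.sum_le_sum
              intro j _
              rw [abs_mul]
              exact mul_le_mul_of_nonneg_left (norm_le_pi_norm v j) (abs_nonneg _)
          _ = (∑ j, |G i j|) * ‖v‖ := by rw [Finset.sum_mul]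
          _ ≤ 9 * Cd * ‖v‖ := mul_le_mul_of_nonneg_right (hG i) (norm_nonneg _)
      have hvi : |v i| ≤ ‖v‖ := norm_le_pi_norm v i
      have hdi := hd i
      -- bound |w i|
      have hwi : |w i| ≤ ρ * ‖v‖ := by
        have habs1 : |w i + τ / 2 * (d i * w i - ∑ j, G i j * w j)| =
            |v i - τ / 2 * (d i * v i - ∑ j, G i j * v j)| := by rw [hrow]
        have h1 : (1 + τ / 2 * d i) * |w i| - τ / 2 * |∑ j, G i j * w j|
            ≤ |w i + τ / 2 * (d i * w i - ∑ j, G i j * w j)| := by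
          have := abs_sub_abs_le_abs_sub ((1 + τ / 2 * d i) * w i)
            (τ / 2 * (∑ j, G i j * w j))
          have he : (1 + τ / 2 * d i) * w i - τ / 2 * (∑ j, G i j * w j)
              = w i + τ / 2 * (d i * w i - ∑ j, G i j * w j) := by ring
          rw [he] at this
          calc (1 + τ / 2 * d i) * |w i| - τ / 2 * |∑ j, G i j * w j|
              = |(1 + τ / 2 * d i)| * |w i| - |τ / 2| * |∑ j, G i j * w j| := by
                rw [abs_of_nonneg (by nlinarith [hdi.1] : (0:ℝ) ≤ 1 + τ / 2 * d i),
                  abs_of_nonneg (by positivity : (0:ℝ) ≤ τ / 2)]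
            _ = |(1 + τ / 2 * d i) * w i| - |τ / 2 * (∑ j, G i j * w j)| := by
                rw [abs_mul, abs_mul]
            _ ≤ _ := this
        have h2 : |v i - τ / 2 * (d i * v i - ∑ j, G i j * v j)|
            ≤ (1 - τ / 2 * d i) * |v i| + τ / 2 * |∑ j, G i j * v j| := by
          have he : v i - τ / 2 * (d i * v i - ∑ j, G i j * v j)
              = (1 - τ / 2 * d i) * v i + τ / 2 * (∑ j, G i j * v j) := by ring
          rw [he]
          calc |(1 - τ / 2 * d i) * v i + τ / 2 * (∑ j, G i j * v j)|
              ≤ |(1 - τ / 2 * d i) * v i| + |τ / 2 * (∑ j, G i j * v j)| := abs_add_le _ _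
            _ = |1 - τ / 2 * d i| * |v i| + |τ / 2| * |∑ j, G i j * v j| := by
                rw [abs_mul, abs_mul]
            _ = (1 - τ / 2 * d i) * |v i| + τ / 2 * |∑ j, G i j * v j| := by
                rw [abs_of_nonneg (by nlinarith [hdi.1, hdi.2] : (0:ℝ) ≤ 1 - τ / 2 * d i),
                  abs_of_nonneg (by positivity : (0:ℝ) ≤ τ / 2)]
        have hGw' : τ / 2 * |∑ j, G i j * w j| ≤ τ / 2 * (9 * Cd * |w i|) :=
          mul_le_mul_of_nonneg_left hGw (by positivity)
        have hGv' : τ / 2 * |∑ j, G i j * v j| ≤ τ / 2 * (9 * Cd * ‖v‖) :=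
          mul_le_mul_of_nonneg_left hGv (by positivity)
        have hmain : (1 + τ / 2 * d i) * |w i| - τ / 2 * (9 * Cd * |w i|)
            ≤ (1 - τ / 2 * d i) * |v i| + τ / 2 * (9 * Cd * ‖v‖) := by
          linarith [h1, h2, habs1, hGw', hGv']
        -- (1 - 5τCd)|w i| ≤ (1 + 5τCd)‖v‖
        have hle : (1 - 5 * τ * Cd) * |w i| ≤ (1 + 5 * τ * Cd) * ‖v‖ :=
          stmt13_aux τ Cd (τ / 2 * d i) (|w i|) (|v i|) (‖v‖) hτ0 hCd hτCd
            (mul_nonneg (by positivity) hdi.1.le)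
            (mul_le_mul_of_nonneg_left hdi.2 (by positivity))
            (abs_nonneg _) (abs_nonneg _) hvi hmain
        rw [hρ, div_mul_eq_mul_div, le_div_iff₀ hden]
        linarith [hle, mul_comm (|w i|) (1 - 5 * τ * Cd)]
      have : ‖w‖ ≤ |w i| :=
        (pi_norm_le_iff_of_nonneg (abs_nonneg _)).mpr fun j => by
          simpa [Real.norm_eq_abs] using hi j
      calc ‖w‖ ≤ |w i| := this
        _ ≤ ρ * ‖v‖ := hwi
  intro k
  induction k with
  | zero => simp
  | succ k ih =>
    have h1 : ‖ε (k + 1)‖ ≤ ρ * ‖ε k‖ := by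
      have := hrec (k + 1) (by omega)
      simp only [Nat.add_sub_cancel] at this
      exact key _ _ this
    calc ‖ε (k + 1)‖ ≤ ρ * ‖ε k‖ := h1
      _ ≤ ρ * (ρ ^ k * ‖ε 0‖) := mul_le_mul_of_nonneg_left ih hρ0
      _ = ρ ^ (k + 1) * ‖ε 0‖ := by ring
end

section
/- Let n ∈ ℕ, C_d > 0, T > 0, ρ ≥ 0, and 0 < τ < 1/(10 C_d). Let A = D − G be a real n × n matrix where D is diagonal with entries 0 < d_i ≤ C_d and G = (g_{ij}) satisfies Σ_j |g_{ij}| ≤ 9 C_d for every row i. If (E^k)_{k ≥ 0} and (R^k)_{k ≥ 1} are vectors in ℝ^n with E^0 = 0, ‖R^k‖_∞ ≤ ρ for all k ≥ 1, and (I + (τ/2)A) E^k = (I − (τ/2)A) E^{k−1} + τ R^k for all k ≥ 1, then for every k with kτ ≤ T, ‖E^k‖_∞ ≤ ρ T exp(20 T C_d). -/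
open Matrix

lemma gv_bound {n : ℕ} (Cd : ℝ) (G : Matrix (Fin n) (Fin n) ℝ)
    (hG : ∀ i, ∑ j, |G i j| ≤ 9 * Cd) (v : Fin n → ℝ) (i : Fin n) :
    |(G *ᵥ v) i| ≤ 9 * Cd * ‖v‖ := by
  have h1 : |(G *ᵥ v) i| ≤ ∑ j, |G i j| * |v j| := by
    simp only [Matrix.mulVec, dotProduct]
    refine (Finset.abs_sum_le_sum_abs _ _).trans ?_
    simp [abs_mul, le_refl]
  refine h1.trans ?_
  have h2 : ∑ j, |G i j| * |v j| ≤ ∑ j, |G i j| * ‖v‖ := by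
    refine Finset.sum_le_sum fun j _ => ?_
    exact mul_le_mul_of_nonneg_left (by simpa using norm_le_pi_norm v j) (abs_nonneg _)
  refine h2.trans ?_
  rw [← Finset.sum_mul]
  exact mul_le_mul_of_nonneg_right (hG i) (norm_nonneg v)

set_option maxHeartbeats 1000000 in
/-- Global error bound for the Crank–Nicolson scheme for the two-dimensional nonlocal
problem with additive Cauchy kernel: if `A = D − G` with `0 < d_i ≤ C_d` and row
absolute sums of `G` at most `9 C_d`, `0 < τ < 1/(10 C_d)`, `E^0 = 0`, `‖R^k‖_∞ ≤ ρ`,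
and `(I + (τ/2)A) E^k = (I − (τ/2)A) E^{k−1} + τ R^k` for `k ≥ 1`, then
`‖E^k‖_∞ ≤ ρ T exp(20 T C_d)` whenever `kτ ≤ T`. -/
theorem stmt14 {n : ℕ} (τ Cd T ρ : ℝ) (hCd : 0 < Cd) (hT : 0 < T) (hρ : 0 ≤ ρ)
    (hτ0 : 0 < τ) (hτ : τ < 1 / (10 * Cd))
    (d : Fin n → ℝ) (G : Matrix (Fin n) (Fin n) ℝ)
    (hd : ∀ i, 0 < d i ∧ d i ≤ Cd)
    (hG : ∀ i, ∑ j, |G i j| ≤ 9 * Cd)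
    (E R : ℕ → Fin n → ℝ) (hE0 : E 0 = 0)
    (hR : ∀ k : ℕ, 1 ≤ k → ‖R k‖ ≤ ρ)
    (hrec : ∀ k : ℕ, 1 ≤ k →
      (1 + (τ / 2) • (Matrix.diagonal d - G)) *ᵥ E k
        = (1 - (τ / 2) • (Matrix.diagonal d - G)) *ᵥ E (k - 1) + τ • R k) :
    ∀ k : ℕ, (k : ℝ) * τ ≤ T → ‖E k‖ ≤ ρ * T * Real.exp (20 * T * Cd) := by
  have hx : τ * Cd < 1 / 10 := by
    rw [lt_div_iff₀ (by positivity)] at hτ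
    nlinarith
  have hxpos : 0 < τ * Cd := by positivity
  have ha : (0:ℝ) < 1 - (9/2) * (τ * Cd) := by nlinarith
  -- key step inequality
  have step : ∀ m : ℕ,
      (1 - (9/2) * (τ * Cd)) * ‖E (m+1)‖ ≤ (1 + 5 * (τ * Cd)) * ‖E m‖ + τ * ρ := by
    intro m
    rcases Nat.eq_zero_or_pos n with hn | hn
    · subst hn
      have hz : ∀ k, ‖E k‖ = 0 := fun k => by
        rw [Subsingleton.elim (E k) 0]; exact norm_zero
      rw [hz, hz]
      nlinarith
    · have : Nonempty (Fin n) := ⟨⟨0, hn⟩⟩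
      obtain ⟨i, hi⟩ := Finite.exists_max (fun i => |E (m+1) i|)
      have hnorm : ‖E (m+1)‖ = |E (m+1) i| := by
        refine le_antisymm ?_ (by simpa using norm_le_pi_norm (E (m+1)) i)
        exact (pi_norm_le_iff_of_nonneg (abs_nonneg _)).2 fun j => by simpa using hi j
      have heq := hrec (m+1) (by omega)
      simp only [Matrix.add_mulVec, Matrix.sub_mulVec, Matrix.one_mulVec,
        Matrix.smul_mulVec] at heq
      have hcomp := congrFun heq i
      simp only [Nat.add_sub_cancel, Pi.add_apply, Pi.sub_apply, Pi.smul_apply,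
        smul_eq_mul, Matrix.mulVec_diagonal] at hcomp
      -- hcomp : E (m+1) i + τ/2 * (d i * E (m+1) i - (G *ᵥ E (m+1)) i)
      --        = E m i - τ/2 * (d i * E m i - (G *ᵥ E m) i) + τ * R (m+1) i
      have hGk := gv_bound Cd G hG (E (m+1)) i
      have hGm := gv_bound Cd G hG (E m) i
      have hEm : |E m i| ≤ ‖E m‖ := by simpa using norm_le_pi_norm (E m) i
      have hRi : |R (m+1) i| ≤ ρ := le_trans (by simpa using norm_le_pi_norm (R (m+1)) i)
        (hR (m+1) (by omega))
      have hdi := hd i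
      have habs : |E (m+1) i + τ/2 * (d i * E (m+1) i - (G *ᵥ E (m+1)) i)|
          ≤ |E m i - τ/2 * (d i * E m i - (G *ᵥ E m) i)| + |τ * R (m+1) i| := by
        rw [hcomp]; exact abs_add_le _ _
      have hnk : ‖E (m+1)‖ ≥ 0 := norm_nonneg _
      have hnm : ‖E m‖ ≥ 0 := norm_nonneg _
      rw [hnorm]
      have hlow : (1 + τ/2 * d i) * |E (m+1) i| - τ/2 * (9 * Cd * ‖E (m+1)‖)
          ≤ |E (m+1) i + τ/2 * (d i * E (m+1) i - (G *ᵥ E (m+1)) i)| := by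
        have h1 : |(1 + τ/2 * d i) * E (m+1) i| = (1 + τ/2 * d i) * |E (m+1) i| := by
          rw [abs_mul, abs_of_pos (by nlinarith [hdi.1])]
        have := abs_sub_abs_le_abs_sub ((1 + τ/2 * d i) * E (m+1) i)
          (τ/2 * (G *ᵥ E (m+1)) i)
        have h2 : |τ/2 * (G *ᵥ E (m+1)) i| ≤ τ/2 * (9 * Cd * ‖E (m+1)‖) := by
          rw [abs_mul, abs_of_pos (by linarith)]
          exact mul_le_mul_of_nonneg_left hGk (by linarith)
        calc (1 + τ/2 * d i) * |E (m+1) i| - τ/2 * (9 * Cd * ‖E (m+1)‖)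
            ≤ |(1 + τ/2 * d i) * E (m+1) i| - |τ/2 * (G *ᵥ E (m+1)) i| := by
              rw [h1]; linarith
          _ ≤ |(1 + τ/2 * d i) * E (m+1) i - τ/2 * (G *ᵥ E (m+1)) i| := this
          _ = |E (m+1) i + τ/2 * (d i * E (m+1) i - (G *ᵥ E (m+1)) i)| := by
              congr 1; ring
      have hup : |E m i - τ/2 * (d i * E m i - (G *ᵥ E m) i)| + |τ * R (m+1) i|
          ≤ (1 + 5 * (τ * Cd)) * ‖E m‖ + τ * ρ := by
        have h1 : |E m i - τ/2 * (d i * E m i - (G *ᵥ E m) i)|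
            ≤ |E m i| + τ/2 * |d i * E m i| + τ/2 * |(G *ᵥ E m) i| := by
          have := abs_sub (E m i) (τ/2 * (d i * E m i - (G *ᵥ E m) i))
          have h2 : |τ/2 * (d i * E m i - (G *ᵥ E m) i)|
              ≤ τ/2 * (|d i * E m i| + |(G *ᵥ E m) i|) := by
            rw [abs_mul, abs_of_pos (by linarith)]
            exact mul_le_mul_of_nonneg_left (abs_sub _ _) (by linarith)
          nlinarith
        have h3 : |d i * E m i| ≤ Cd * ‖E m‖ := by
          rw [abs_mul, abs_of_pos hdi.1]
          exact mul_le_mul hdi.2 hEm (abs_nonneg _) hCd.le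
        have h4 : |τ * R (m+1) i| ≤ τ * ρ := by
          rw [abs_mul, abs_of_pos hτ0]
          exact mul_le_mul_of_nonneg_left hRi hτ0.le
        have h5 : τ/2 * |(G *ᵥ E m) i| ≤ τ/2 * (9 * Cd * ‖E m‖) :=
          mul_le_mul_of_nonneg_left hGm (by linarith)
        have h6 : τ/2 * |d i * E m i| ≤ τ/2 * (Cd * ‖E m‖) :=
          mul_le_mul_of_nonneg_left h3 (by linarith)
        nlinarith [h1, h4, h5, h6, hEm]
      have hfin := hlow.trans (habs.trans hup)
      rw [hnorm] at hfin
      linarith [hfin, mul_nonneg (mul_nonneg hτ0.le hdi.1.le) (abs_nonneg (E (m+1) i))]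
  -- induction: ‖E k‖ ≤ ρ * (k*τ) * exp(20*Cd*τ*k)
  have key : ∀ k : ℕ, ‖E k‖ ≤ ρ * (k * τ) * Real.exp (20 * Cd * τ * k) := by
    intro k
    induction k with
    | zero => simp [hE0]
    | succ m ih =>
      have hstep := step m
      set a := 1 - (9/2) * (τ * Cd) with ha_def
      set b := 1 + 5 * (τ * Cd) with hb_def
      have he : 1 + 20 * (τ * Cd) ≤ Real.exp (20 * Cd * τ) := by
        have := Real.add_one_le_exp (20 * Cd * τ)
        nlinarith
      have hem : (1:ℝ) ≤ Real.exp (20 * Cd * τ * m) := by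
        refine Real.one_le_exp ?_
        positivity
      have hexp_add : Real.exp (20 * Cd * τ * (m+1))
          = Real.exp (20 * Cd * τ * m) * Real.exp (20 * Cd * τ) := by
        rw [← Real.exp_add]; ring_nf
      have hnm : (0:ℝ) ≤ ‖E m‖ := norm_nonneg _
      have hepos : (0:ℝ) < Real.exp (20 * Cd * τ) := Real.exp_pos _
      have hempos : (0:ℝ) < Real.exp (20 * Cd * τ * m) := Real.exp_pos _
      push_cast
      rw [hexp_add]
      -- a * ‖E (m+1)‖ ≤ b * ‖E m‖ + τρ ≤ b * ρ m τ em + τρ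
      have h1 : a * ‖E (m+1)‖ ≤ b * (ρ * (m * τ) * Real.exp (20 * Cd * τ * m)) + τ * ρ := by
        refine hstep.trans ?_
        have hb : (0:ℝ) < b := by rw [hb_def]; nlinarith
        nlinarith
      have hae : b ≤ a * Real.exp (20 * Cd * τ) := by
        have h0 : b ≤ a * (1 + 20 * (τ * Cd)) := by
          rw [ha_def, hb_def]; nlinarith
        exact h0.trans (mul_le_mul_of_nonneg_left he ha.le)
      have hb1 : (1:ℝ) ≤ b := by rw [hb_def]; nlinarith
      have hae1 : (1:ℝ) ≤ a * Real.exp (20 * Cd * τ) := hb1.trans hae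
      have hone : (1:ℝ) ≤ a * Real.exp (20 * Cd * τ) * Real.exp (20 * Cd * τ * m) := by
        nlinarith [hae1, hem]
      have h2 : τ * ρ ≤ a * Real.exp (20 * Cd * τ) * (ρ * τ * Real.exp (20 * Cd * τ * m)) := by
        nlinarith [hone, mul_nonneg hρ hτ0.le]
      have h3 : b * (ρ * (m * τ) * Real.exp (20 * Cd * τ * m))
          ≤ a * Real.exp (20 * Cd * τ) * (ρ * (m * τ) * Real.exp (20 * Cd * τ * m)) :=
        mul_le_mul_of_nonneg_right hae (by positivity)
      have final : a * ‖E (m+1)‖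
          ≤ a * (ρ * ((m + 1) * τ) * (Real.exp (20 * Cd * τ * m) * Real.exp (20 * Cd * τ))) := by
        linarith [h1, h2, h3]
      exact le_of_mul_le_mul_left final ha
  intro k hk
  refine (key k).trans ?_
  have h1 : 20 * Cd * τ * k ≤ 20 * T * Cd := by nlinarith [Nat.cast_nonneg (α := ℝ) k]
  have h2 : ρ * (k * τ) ≤ ρ * T := by
    refine mul_le_mul_of_nonneg_left ?_ hρ
    nlinarith [Nat.cast_nonneg (α := ℝ) k]
  calc ρ * (k * τ) * Real.exp (20 * Cd * τ * k)
      ≤ ρ * T * Real.exp (20 * Cd * τ * k) := by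
        exact mul_le_mul_of_nonneg_right h2 (Real.exp_pos _).le
    _ ≤ ρ * T * Real.exp (20 * T * Cd) := by
        exact mul_le_mul_of_nonneg_left (Real.exp_le_exp.2 h1) (by positivity)
end
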